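/- arXiv:2511.16864 — 7 statements merged into one kernel-verified Lean document; each statement's English description precedes it below -/
import Mathlib

section
/- Let X be a real random variable with E[X²] < ∞ and variance σ² > 0, let Y = X + Z where Z is standard Gaussian and independent of X, and set a = σ²/(1+σ²). Let ĝ : ℝ → ℂ be integrable and square-integrable and define g(x) = ∫_ℝ ĝ(t) e^{itx} dt. Then E[(X − aY)·g(Y)] = (−i)·∫_ℝ ĝ(t)·φ̃_X(t)·e^{−t²/2} dt, where φ̃_X(t) = (1/(1+σ²))·(φ_X′(t) + σ²·t·φ_X(t)). -/
/-!
Writing `g` as a Fourier integral and exchanging the two integrals (Fubini: `ĝ`, `X` and `Y` are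
integrable) reduces the claim to the pointwise identity
`E[(X - aY) e^{itY}] = -i ((1 - a) φ_X'(t) + a t φ_X(t)) e^{-t²/2}`.
By independence, `E[X e^{itY}] = E[X e^{itX}] φ_Z(t)` and `E[Z e^{itY}] = φ_X(t) E[Z e^{itZ}]`;
for an integrable `W`, `E[W e^{itW}] = -i φ_W'(t)`, which for the standard Gaussian is
`i t e^{-t²/2}`. With `1 - a = 1/(1 + σ²)` and `a = σ²/(1 + σ²)` this is the right-hand side.
-/

open MeasureTheory ProbabilityTheory Real Complex

lemma integral_mul_cexp_eq_neg_I_mul_deriv_charFun {ν : Measure ℝ} [IsFiniteMeasure ν]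
    (hν : Integrable id ν) (t : ℝ) :
    ∫ x, (x : ℂ) * cexp (t * x * I) ∂ν = -I * deriv (charFun ν) t := by
  rw [← iteratedDeriv_one, iteratedDeriv_charFun (by simpa [memLp_one_iff_integrable] using hν)]
  simp [← mul_assoc]

lemma integral_mul_cexp_gaussianReal (m : ℝ) (v : NNReal) (t : ℝ) :
    ∫ x, (x : ℂ) * cexp (t * x * I) ∂(gaussianReal m v) =
      (m + I * v * t) * cexp (t * m * I - v * t ^ 2 / 2) := by
  have hexponent : HasDerivAt (fun s : ℂ => s * m * I - v * s ^ 2 / 2) (m * I - v * t) t := by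
    refine ((((hasDerivAt_id' (t : ℂ)).mul_const (m : ℂ)).mul_const I).fun_sub
      (((hasDerivAt_pow 2 (t : ℂ)).const_mul (v : ℂ)).div_const 2)).congr_deriv ?_
    push_cast
    ring
  have hderiv : HasDerivAt (charFun (gaussianReal m v))
      ((m * I - v * t) * cexp (t * m * I - v * t ^ 2 / 2)) t := by
    rw [funext (charFun_gaussianReal (μ := m) (v := v)), mul_comm]
    exact hexponent.cexp.comp_ofReal
  rw [integral_mul_cexp_eq_neg_I_mul_deriv_charFun
    (memLp_one_iff_integrable.mp (memLp_id_gaussianReal 1)), hderiv.deriv]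
  linear_combination (-(m : ℂ) * cexp (t * m * I - v * t ^ 2 / 2)) * I_sq

lemma norm_cexp_ofReal_mul_ofReal_mul_I (t x : ℝ) : ‖cexp (t * x * I)‖ = 1 := by
  exact_mod_cast norm_exp_ofReal_mul_I (t * x)

section

variable {Ω : Type*} {mΩ : MeasurableSpace Ω} {μ : Measure Ω}

lemma MeasureTheory.Integrable.ofReal_mul_cexp {W V : Ω → ℝ} (hW : Integrable W μ)
    (hV : Measurable V) (t : ℝ) :
    Integrable (fun ω => (W ω : ℂ) * cexp (t * V ω * I)) μ :=
  hW.ofReal.mul_bdd (c := 1) (by fun_prop)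
    (ae_of_all _ fun ω => (norm_cexp_ofReal_mul_ofReal_mul_I t (V ω)).le)

lemma charFun_map_eq_integral {Z : Ω → ℝ} (hZ : AEMeasurable Z μ) (t : ℝ) :
    charFun (μ.map Z) t = ∫ ω, cexp (t * Z ω * I) ∂μ := by
  rw [charFun_apply_real, integral_map hZ (by fun_prop)]

lemma ProbabilityTheory.IndepFun.integral_mul_cexp_add {X Z : Ω → ℝ} (hXZ : IndepFun X Z μ)
    (hX : AEMeasurable X μ) (hZ : AEMeasurable Z μ) (t : ℝ) :
    ∫ ω, (X ω : ℂ) * cexp (t * (X ω + Z ω) * I) ∂μ =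
      (∫ ω, (X ω : ℂ) * cexp (t * X ω * I) ∂μ) * charFun (μ.map Z) t := by
  have hsplit (ω : Ω) : (X ω : ℂ) * cexp (t * (X ω + Z ω) * I) =
      (X ω : ℂ) * cexp (t * X ω * I) * cexp (t * Z ω * I) := by
    rw [mul_assoc _ (cexp _), ← Complex.exp_add]
    ring_nf
  simp_rw [hsplit, charFun_map_eq_integral hZ]
  exact hXZ.integral_fun_comp_mul_comp (f := fun x : ℝ => (x : ℂ) * cexp (t * x * I))
    (g := fun z : ℝ => cexp (t * z * I)) hX hZ (by fun_prop) (by fun_prop)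

lemma integral_mul_integral_cexp_comm [SFinite μ] {A : Ω → ℂ} (hA : Integrable A μ)
    {Y : Ω → ℝ} (hY : Measurable Y) {ĝ : ℝ → ℂ} (hĝ : Integrable ĝ) :
    ∫ ω, A ω * (∫ t, ĝ t * cexp (t * Y ω * I)) ∂μ =
      ∫ t, ĝ t * ∫ ω, A ω * cexp (t * Y ω * I) ∂μ := by
  have hprod : Integrable (Function.uncurry fun ω t => A ω * (ĝ t * cexp (t * Y ω * I)))
      (μ.prod volume) := by
    refine (hA.norm.mul_prod hĝ.norm).mono' ?_ (ae_of_all _ fun p => ?_)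
    · exact hA.aestronglyMeasurable.comp_fst.mul
        (hĝ.aestronglyMeasurable.comp_snd.mul (by fun_prop))
    · simp [Function.uncurry, norm_cexp_ofReal_mul_ofReal_mul_I]
  calc ∫ ω, A ω * (∫ t, ĝ t * cexp (t * Y ω * I)) ∂μ
      = ∫ ω, (∫ t, A ω * (ĝ t * cexp (t * Y ω * I))) ∂μ := by simp_rw [integral_const_mul]
    _ = ∫ t, ∫ ω, A ω * (ĝ t * cexp (t * Y ω * I)) ∂μ := integral_integral_swap hprod
    _ = ∫ t, ĝ t * ∫ ω, A ω * cexp (t * Y ω * I) ∂μ := by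
        simp_rw [← integral_const_mul, mul_left_comm]

lemma integral_sub_mul_add_mul_cexp_add [IsProbabilityMeasure μ] {X Z : Ω → ℝ}
    (hX : Measurable X) (hZ : Measurable Z) (hXZ : IndepFun X Z μ)
    (hZ_gauss : μ.map Z = gaussianReal 0 1) (hX_int : Integrable X μ) (a t : ℝ) :
    ∫ ω, ((X ω - a * (X ω + Z ω) : ℝ) : ℂ) * cexp (t * (X ω + Z ω) * I) ∂μ =
      -I * ((1 - a) * deriv (charFun (μ.map X)) t + a * t * charFun (μ.map X) t) *
        cexp (-t ^ 2 / 2) := by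
  have hZ_int : Integrable Z μ := (HasLaw.hasGaussianLaw ⟨hZ.aemeasurable, hZ_gauss⟩).integrable
  have hX_moment :
      ∫ ω, (X ω : ℂ) * cexp (t * X ω * I) ∂μ = -I * deriv (charFun (μ.map X)) t := by
    rw [← integral_map (f := fun x : ℝ => (x : ℂ) * cexp (t * x * I)) hX.aemeasurable
        (by fun_prop),
      integral_mul_cexp_eq_neg_I_mul_deriv_charFun
        ((integrable_map_measure aestronglyMeasurable_id hX.aemeasurable).mpr hX_int)]
  have hZ_charFun : charFun (μ.map Z) t = cexp (-t ^ 2 / 2) := by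
    rw [hZ_gauss, charFun_gaussianReal]
    congr 1
    push_cast
    ring
  have hZ_moment : ∫ ω, (Z ω : ℂ) * cexp (t * Z ω * I) ∂μ = I * t * cexp (-t ^ 2 / 2) := by
    rw [← integral_map (f := fun z : ℝ => (z : ℂ) * cexp (t * z * I)) hZ.aemeasurable
        (by fun_prop),
      hZ_gauss, integral_mul_cexp_gaussianReal]
    congr 1 <;> simp [neg_div]
  have hXZ_moment := hXZ.integral_mul_cexp_add hX.aemeasurable hZ.aemeasurable t
  have hZX_moment := hXZ.symm.integral_mul_cexp_add hZ.aemeasurable hX.aemeasurable t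
  simp_rw [add_comm (Z _ : ℂ)] at hZX_moment
  calc ∫ ω, ((X ω - a * (X ω + Z ω) : ℝ) : ℂ) * cexp (t * (X ω + Z ω) * I) ∂μ
      = ∫ ω, ((1 - a) * ((X ω : ℂ) * cexp (t * (X ω + Z ω) * I)) -
          a * ((Z ω : ℂ) * cexp (t * (X ω + Z ω) * I))) ∂μ := by
        congr 1
        ext ω
        push_cast
        ring
    _ = (1 - a) * ∫ ω, (X ω : ℂ) * cexp (t * (X ω + Z ω) * I) ∂μ -
          a * ∫ ω, (Z ω : ℂ) * cexp (t * (X ω + Z ω) * I) ∂μ := by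
        rw [integral_sub, integral_const_mul, integral_const_mul]
        · simpa using (hX_int.ofReal_mul_cexp (hX.add hZ) t).const_mul (1 - a : ℂ)
        · simpa using (hZ_int.ofReal_mul_cexp (hX.add hZ) t).const_mul (a : ℂ)
    _ = _ := by
        rw [hXZ_moment, hZX_moment, hX_moment, hZ_charFun, hZ_moment]
        ring

end

theorem stmt_4_general {Ω : Type*} {mΩ : MeasurableSpace Ω} (μ : Measure Ω) [IsProbabilityMeasure μ]
    (X Z Y : Ω → ℝ) (hX : Measurable X) (hZ : Measurable Z)
    (hZ_gauss : μ.map Z = gaussianReal 0 1)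
    (hindep : IndepFun X Z μ)
    (hXL2 : MemLp X 2 μ)
    (σ2 : ℝ) (hσ2 : 0 < σ2)
    (hY : Y = fun ω => X ω + Z ω)
    (a : ℝ) (ha : a = σ2 / (1 + σ2))
    (ghat : ℝ → ℂ) (hghat1 : Integrable ghat)
    (g : ℝ → ℂ) (hg : g = fun x : ℝ => ∫ t : ℝ, ghat t * Complex.exp (Complex.I * (t : ℂ) * (x : ℂ)))
    (φ : ℝ → ℂ) (hφ : φ = fun t : ℝ => ∫ ω, Complex.exp (Complex.I * (t : ℂ) * (X ω : ℂ)) ∂μ) :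
    ∫ ω, ((X ω - a * Y ω : ℝ) : ℂ) * g (Y ω) ∂μ =
      (-Complex.I) * ∫ t : ℝ,
          ghat t * ((1 / (1 + σ2 : ℂ)) * (deriv φ t + (σ2 : ℂ) * (t : ℂ) * φ t)) *
            Complex.exp (-((t : ℂ) ^ 2) / 2) := by
  have hφ_charFun : φ = charFun (μ.map X) := by
    ext t
    rw [hφ, charFun_map_eq_integral hX.aemeasurable]
    simp only [mul_comm I, mul_assoc]
  have hg_apply (x : ℝ) : g x = ∫ t, ghat t * cexp (t * x * I) := by
    simp only [hg, mul_comm I, mul_assoc]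
  subst hY ha hφ_charFun
  have hX_int : Integrable X μ := hXL2.integrable one_le_two
  have hZ_int : Integrable Z μ := (HasLaw.hasGaussianLaw ⟨hZ.aemeasurable, hZ_gauss⟩).integrable
  have h1σ2 : (1 + σ2 : ℂ) ≠ 0 := by exact_mod_cast (by positivity : 1 + σ2 ≠ 0)
  calc ∫ ω, ((X ω - σ2 / (1 + σ2) * (X ω + Z ω) : ℝ) : ℂ) * g (X ω + Z ω) ∂μ
      = ∫ t, ghat t * ∫ ω, ((X ω - σ2 / (1 + σ2) * (X ω + Z ω) : ℝ) : ℂ) *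
          cexp (t * (X ω + Z ω : ℝ) * I) ∂μ := by
        simp_rw [hg_apply]
        exact integral_mul_integral_cexp_comm
          (hX_int.sub ((hX_int.add hZ_int).const_mul _)).ofReal (hX.add hZ) hghat1
    _ = _ := by
        simp_rw [ofReal_add, integral_sub_mul_add_mul_cexp_add hX hZ hindep hZ_gauss hX_int,
          ← integral_const_mul]
        congr 1
        ext t
        push_cast
        field_simp
        ring

theorem stmt_4 {Ω : Type*} {mΩ : MeasurableSpace Ω} (μ : Measure Ω) [IsProbabilityMeasure μ]
    (X Z Y : Ω → ℝ) (hX : Measurable X) (hZ : Measurable Z)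
    (hZ_gauss : μ.map Z = gaussianReal 0 1)
    (hindep : IndepFun X Z μ)
    (hXL2 : MemLp X 2 μ)
    (σ2 : ℝ) (hσ2 : 0 < σ2) (hvar : variance X μ = σ2)
    (hY : Y = fun ω => X ω + Z ω)
    (a : ℝ) (ha : a = σ2 / (1 + σ2))
    (ghat : ℝ → ℂ) (hghat1 : Integrable ghat) (hghat2 : MemLp ghat 2 volume)
    (g : ℝ → ℂ) (hg : g = fun x : ℝ => ∫ t : ℝ, ghat t * Complex.exp (Complex.I * (t : ℂ) * (x : ℂ)))
    (φ : ℝ → ℂ) (hφ : φ = fun t : ℝ => ∫ ω, Complex.exp (Complex.I * (t : ℂ) * (X ω : ℂ)) ∂μ) :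
    ∫ ω, ((X ω - a * Y ω : ℝ) : ℂ) * g (Y ω) ∂μ =
      (-Complex.I) * ∫ t : ℝ,
          ghat t * ((1 / (1 + σ2 : ℂ)) * (deriv φ t + (σ2 : ℂ) * (t : ℂ) * φ t)) *
            Complex.exp (-((t : ℂ) ^ 2) / 2) :=
  stmt_4_general (mΩ := mΩ) μ X Z Y hX hZ hZ_gauss hindep hXL2 σ2 hσ2 hY a ha ghat hghat1 g hg φ hφ
end

section
/- Let X be a real random variable with a continuous, strictly positive Lebesgue density f and E[|X|] < ∞, and let Y = X + Z where Z is standard Gaussian and independent of X. For y ∈ ℝ define the conditional CDF F(x|y) = (∫_{−∞}^x f(u)·e^{−(u−y)²/2} du)/(∫_ℝ f(u)·e^{−(u−y)²/2} du). Then for every p ∈ (0,1), the conditional quantile map y ↦ q_p(y), where q_p(y) is the unique real number with F(q_p(y)|y) = p, is nondecreasing in y. In particular, the conditional median y ↦ q_{1/2}(y) is nondecreasing. -/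
open MeasureTheory Real

theorem stmt_5 (f : ℝ → ℝ) (hf_cont : Continuous f) (hf_pos : ∀ x, 0 < f x)
    (hf_int : Integrable f) (hf_one : ∫ x, f x = 1)
    (hf_moment : Integrable (fun x => |x| * f x))
    (F : ℝ → ℝ → ℝ)
    (hF : F = fun x y => (∫ u in Set.Iic x, f u * Real.exp (-(u - y) ^ 2 / 2)) /
        (∫ u, f u * Real.exp (-(u - y) ^ 2 / 2)))
    (p : ℝ) (hp : p ∈ Set.Ioo (0:ℝ) 1) :
    ∀ y₁ y₂ q₁ q₂ : ℝ, y₁ ≤ y₂ → F q₁ y₁ = p → F q₂ y₂ = p → q₁ ≤ q₂ := by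
  subst hF
  intro y₁ y₂ q₁ q₂ hy h1 h2
  set g : ℝ → ℝ → ℝ := fun y u => f u * Real.exp (-(u - y) ^ 2 / 2) with hg
  have hg_cont : ∀ y, Continuous (g y) := fun y => by
    apply hf_cont.mul
    fun_prop
  have hg_pos : ∀ y u, 0 < g y u := fun y u => mul_pos (hf_pos u) (Real.exp_pos _)
  have hg_int : ∀ y, Integrable (g y) := by
    intro y
    refine hf_int.mono' (hg_cont y).aestronglyMeasurable ?_
    filter_upwards with u
    rw [Real.norm_eq_abs, abs_of_pos (hg_pos y u)]
    calc f u * Real.exp (-(u - y) ^ 2 / 2) ≤ f u * 1 := by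
          apply mul_le_mul_of_nonneg_left _ (hf_pos u).le
          exact Real.exp_le_one_iff.2 (by nlinarith [sq_nonneg (u - y)])
      _ = f u := mul_one _
  -- positivity of truncated integrals
  have hIoc_pos : ∀ y a b, a < b → 0 < ∫ u in Set.Ioc a b, g y u := by
    intro y a b hab
    rw [← intervalIntegral.integral_of_le hab.le]
    exact intervalIntegral.intervalIntegral_pos_of_pos_on
      ((hg_int y).intervalIntegrable) (fun u _ => hg_pos y u) hab
  have hA_pos : ∀ y x, 0 < ∫ u in Set.Iic x, g y u := by
    intro y x
    have hsplit : (Set.Iic x : Set ℝ) = Set.Iic (x - 1) ∪ Set.Ioc (x - 1) x :=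
      (Set.Iic_union_Ioc_eq_Iic (by linarith)).symm
    have hI1 : 0 ≤ ∫ u in Set.Iic (x - 1), g y u :=
      setIntegral_nonneg measurableSet_Iic fun u _ => (hg_pos y u).le
    have hI2 : 0 < ∫ u in Set.Ioc (x - 1) x, g y u := hIoc_pos y _ _ (by linarith)
    rw [hsplit, setIntegral_union (Set.Iic_disjoint_Ioc le_rfl) measurableSet_Ioc
      (hg_int y).integrableOn (hg_int y).integrableOn]
    linarith
  have hB_nonneg : ∀ y x, 0 ≤ ∫ u in Set.Ioi x, g y u := fun y x =>
    setIntegral_nonneg measurableSet_Ioi fun u _ => (hg_pos y u).le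
  have hsplitN : ∀ y x, ∫ u, g y u = (∫ u in Set.Iic x, g y u) + ∫ u in Set.Ioi x, g y u := by
    intro y x
    rw [← setIntegral_union (Set.Iic_disjoint_Ioi le_rfl) measurableSet_Ioi
      (hg_int y).integrableOn (hg_int y).integrableOn, Set.Iic_union_Ioi,
      setIntegral_univ]
  -- key pointwise MLR inequality
  have key : ∀ u v : ℝ, u ≤ v → g y₂ u * g y₁ v ≤ g y₁ u * g y₂ v := by
    intro u v huv
    simp only [hg]
    have hmul : ∀ a b : ℝ, (f u * Real.exp a) * (f v * Real.exp b)
        = (f u * f v) * Real.exp (a + b) := by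
      intro a b; rw [Real.exp_add]; ring
    rw [hmul, hmul]
    apply mul_le_mul_of_nonneg_left _ (mul_pos (hf_pos u) (hf_pos v)).le
    apply Real.exp_le_exp.2
    nlinarith [mul_nonneg (sub_nonneg.2 hy) (sub_nonneg.2 huv)]
  -- notation for the four pieces at x = q₂
  set A₁ := ∫ u in Set.Iic q₂, g y₁ u with hA1
  set A₂ := ∫ u in Set.Iic q₂, g y₂ u with hA2
  set B₁ := ∫ u in Set.Ioi q₂, g y₁ u with hB1
  set B₂ := ∫ u in Set.Ioi q₂, g y₂ u with hB2
  have hA : A₂ * g y₁ q₂ ≤ A₁ * g y₂ q₂ := by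
    rw [hA1, hA2, ← integral_mul_const, ← integral_mul_const]
    apply setIntegral_mono_on ((hg_int y₂).integrableOn.mul_const _)
      ((hg_int y₁).integrableOn.mul_const _) measurableSet_Iic
    intro u hu
    exact key u q₂ hu
  have hB : g y₂ q₂ * B₁ ≤ g y₁ q₂ * B₂ := by
    rw [hB1, hB2, ← integral_const_mul, ← integral_const_mul]
    apply setIntegral_mono_on ((hg_int y₁).integrableOn.const_mul _)
      ((hg_int y₂).integrableOn.const_mul _) measurableSet_Ioi
    intro v hv
    exact key q₂ v (le_of_lt hv)
  have hgq1 : 0 < g y₁ q₂ := hg_pos y₁ q₂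
  have hgq2 : 0 < g y₂ q₂ := hg_pos y₂ q₂
  have hA1p : 0 < A₁ := hA_pos y₁ q₂
  have hA2p : 0 < A₂ := hA_pos y₂ q₂
  have hB1n : 0 ≤ B₁ := hB_nonneg y₁ q₂
  have hB2n : 0 ≤ B₂ := hB_nonneg y₂ q₂
  have h5 : A₂ * B₁ ≤ A₁ * B₂ := by
    have hm : (A₂ * g y₁ q₂) * (g y₂ q₂ * B₁) ≤ (A₁ * g y₂ q₂) * (g y₁ q₂ * B₂) :=
      mul_le_mul hA hB (by positivity) (by positivity)
    have hc : 0 < g y₁ q₂ * g y₂ q₂ := by positivity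
    apply le_of_mul_le_mul_right _ hc
    calc A₂ * B₁ * (g y₁ q₂ * g y₂ q₂) = (A₂ * g y₁ q₂) * (g y₂ q₂ * B₁) := by ring
      _ ≤ (A₁ * g y₂ q₂) * (g y₁ q₂ * B₂) := hm
      _ = A₁ * B₂ * (g y₁ q₂ * g y₂ q₂) := by ring
  -- F q₂ y₂ ≤ F q₂ y₁
  have hmono_y : A₂ / (∫ u, g y₂ u) ≤ A₁ / (∫ u, g y₁ u) := by
    rw [hsplitN y₂ q₂, hsplitN y₁ q₂, ← hA1, ← hA2, ← hB1, ← hB2]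
    rw [div_le_div_iff₀ (by linarith) (by linarith)]
    nlinarith [h5]
  -- Now suppose q₂ < q₁ for contradiction
  by_contra hcon
  push_neg at hcon
  have hstrict : A₁ < ∫ u in Set.Iic q₁, g y₁ u := by
    have hsplit : (Set.Iic q₁ : Set ℝ) = Set.Iic q₂ ∪ Set.Ioc q₂ q₁ :=
      (Set.Iic_union_Ioc_eq_Iic hcon.le).symm
    rw [hsplit, setIntegral_union (Set.Iic_disjoint_Ioc le_rfl) measurableSet_Ioc
      (hg_int y₁).integrableOn (hg_int y₁).integrableOn]
    have := hIoc_pos y₁ q₂ q₁ hcon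
    rw [← hA1]
    linarith
  have hN1 : 0 < ∫ u, g y₁ u := by
    rw [hsplitN y₁ q₂, ← hA1, ← hB1]; linarith
  have hstrictF : A₁ / (∫ u, g y₁ u) < (∫ u in Set.Iic q₁, g y₁ u) / (∫ u, g y₁ u) := by
    exact (div_lt_div_iff_of_pos_right hN1).2 hstrict
  simp only [hg] at h1 h2 hmono_y hstrictF
  linarith
end

section
/- Let a > 0, let ψ : ℝ → ℝ be a nondecreasing function, and suppose ∫_ℝ |ψ(y) − ay| dy ≤ ε for some ε ≥ 0. Then sup_{y∈ℝ} |ψ(y) − ay| ≤ √(2aε). -/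
open MeasureTheory Real

open intervalIntegral in
private lemma my_integral_id {a b : ℝ} : ∫ x in a..b, (x : ℝ) = (b ^ 2 - a ^ 2) / 2 :=
  integral_id

/-- Auxiliary: if the deviation at `y₀` is nonnegative, it is at most `√(2aε)`. -/
lemma aux_stmt_12 (a : ℝ) (ha : 0 < a) (ψ : ℝ → ℝ) (hψ : Monotone ψ)
    (ε : ℝ) (hε : 0 ≤ ε)
    (hint : ∫⁻ y : ℝ, ENNReal.ofReal |ψ y - a * y| ≤ ENNReal.ofReal ε)
    (y₀ : ℝ) (hd : 0 ≤ ψ y₀ - a * y₀) :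
    ψ y₀ - a * y₀ ≤ Real.sqrt (2 * a * ε) := by
  set d := ψ y₀ - a * y₀ with hdef
  have hca : 0 ≤ d / a := div_nonneg hd ha.le
  have hle : y₀ ≤ y₀ + d / a := by linarith
  set s : Set ℝ := Set.Ioc y₀ (y₀ + d / a) with hs
  have hms : MeasurableSet s := measurableSet_Ioc
  have hfc : Continuous (fun y : ℝ => d + a * y₀ - a * y) := by continuity
  have hfint : IntegrableOn (fun y : ℝ => d + a * y₀ - a * y) s := hfc.integrableOn_Ioc
  have hfnn : 0 ≤ᵐ[volume.restrict s] (fun y : ℝ => d + a * y₀ - a * y) := by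
    filter_upwards [ae_restrict_mem hms] with y hy
    have h1 : a * y ≤ a * (y₀ + d / a) := mul_le_mul_of_nonneg_left hy.2 ha.le
    have h2 : a * y ≤ a * y₀ + d := by
      rw [mul_add, mul_div_cancel₀ _ ha.ne'] at h1; linarith
    simp only [Pi.zero_apply]; linarith
  -- compute the integral over s
  have hcalc : ∫ y in s, (d + a * y₀ - a * y) = d ^ 2 / (2 * a) := by
    rw [hs, ← intervalIntegral.integral_of_le hle]
    have h1 : IntervalIntegrable (fun _ : ℝ => d + a * y₀) volume y₀ (y₀ + d / a) :=
      intervalIntegrable_const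
    have h2 : IntervalIntegrable (fun y : ℝ => a * y) volume y₀ (y₀ + d / a) :=
      (intervalIntegral.intervalIntegrable_id).const_mul a
    rw [show (fun y : ℝ => d + a * y₀ - a * y) = (fun y : ℝ => (d + a * y₀) - a * y) from rfl]
    rw [intervalIntegral.integral_sub h1 h2, intervalIntegral.integral_const,
      intervalIntegral.integral_const_mul, my_integral_id,
      smul_eq_mul]
    field_simp
    ring
  -- lower bound the lintegral
  have key : ENNReal.ofReal (d ^ 2 / (2 * a)) ≤ ∫⁻ y : ℝ, ENNReal.ofReal |ψ y - a * y| := by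
    calc ENNReal.ofReal (d ^ 2 / (2 * a))
        = ENNReal.ofReal (∫ y in s, (d + a * y₀ - a * y)) := by rw [hcalc]
      _ = ∫⁻ y in s, ENNReal.ofReal (d + a * y₀ - a * y) :=
          ofReal_integral_eq_lintegral_ofReal hfint hfnn
      _ ≤ ∫⁻ y in s, ENNReal.ofReal |ψ y - a * y| := by
          refine lintegral_mono_ae ?_
          filter_upwards [ae_restrict_mem hms] with y hy
          refine ENNReal.ofReal_le_ofReal ?_
          have h1 : ψ y₀ ≤ ψ y := hψ hy.1.le
          have h2 : d + a * y₀ - a * y = ψ y₀ - a * y := by rw [hdef]; ring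
          calc d + a * y₀ - a * y = ψ y₀ - a * y := h2
            _ ≤ ψ y - a * y := by linarith
            _ ≤ |ψ y - a * y| := le_abs_self _
      _ ≤ ∫⁻ y : ℝ, ENNReal.ofReal |ψ y - a * y| := setLIntegral_le_lintegral s _
  have hle2 : d ^ 2 / (2 * a) ≤ ε := by
    have h3 := key.trans hint
    rwa [ENNReal.ofReal_le_ofReal_iff hε] at h3
  have hsq : d ^ 2 ≤ 2 * a * ε := by
    rw [div_le_iff₀ (by positivity)] at hle2
    linarith
  exact (Real.le_sqrt hd (by positivity)).mpr hsq

theorem stmt_12 (a : ℝ) (ha : 0 < a) (ψ : ℝ → ℝ) (hψ : Monotone ψ)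
    (ε : ℝ) (hε : 0 ≤ ε)
    (hint : ∫⁻ y : ℝ, ENNReal.ofReal |ψ y - a * y| ≤ ENNReal.ofReal ε) :
    ∀ y : ℝ, |ψ y - a * y| ≤ Real.sqrt (2 * a * ε) := by
  intro y₀
  rcases le_or_gt 0 (ψ y₀ - a * y₀) with hd | hd
  · rw [abs_of_nonneg hd]
    exact aux_stmt_12 a ha ψ hψ ε hε hint y₀ hd
  · rw [abs_of_neg hd]
    set φ : ℝ → ℝ := fun y => -ψ (-y) with hφ
    have hφm : Monotone φ := fun x y h => neg_le_neg (hψ (neg_le_neg h))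
    have hmeas : Measurable fun y : ℝ => ENNReal.ofReal |ψ y - a * y| :=
      (ENNReal.measurable_ofReal.comp ((hψ.measurable.sub (measurable_const.mul measurable_id)).abs))
    have hintφ : ∫⁻ y : ℝ, ENNReal.ofReal |φ y - a * y| ≤ ENNReal.ofReal ε := by
      have heq : ∀ y : ℝ, |φ y - a * y| = |ψ (-y) - a * (-y)| := by
        intro y
        rw [hφ]
        rw [show -ψ (-y) - a * y = -(ψ (-y) - a * (-y)) by ring, abs_neg]
      calc ∫⁻ y : ℝ, ENNReal.ofReal |φ y - a * y|
          = ∫⁻ y : ℝ, ENNReal.ofReal |ψ (-y) - a * (-y)| := by simp_rw [heq]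
        _ = ∫⁻ y : ℝ, ENNReal.ofReal |ψ y - a * y| :=
            (Measure.measurePreserving_neg (volume : Measure ℝ)).lintegral_comp hmeas
        _ ≤ ENNReal.ofReal ε := hint
    have hd' : 0 ≤ φ (-y₀) - a * (-y₀) := by
      simp only [hφ, neg_neg]
      linarith
    have := aux_stmt_12 a ha φ hφm ε hε hintφ (-y₀) hd'
    simp only [hφ, neg_neg] at this
    linarith
end

section
/- Let a ∈ (0,1), ε ≥ 0, and let X be a random variable with Lebesgue density f satisfying f(x) ≤ M for all x. Let ψ be the conditional median of X given Y (where Y = X + Z, Z standard Gaussian independent of X), and suppose sup_y |ay − ψ(y)| ≤ √(2aε). Then for every y ∈ ℝ, |T_a[f](y)| ≤ 2M·|ay − ψ(y)|·exp(−min_{x ∈ [ay−√(2aε), ay+√(2aε)]} (x−y)²/2). -/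
open MeasureTheory Real

theorem stmt_13 (a ε M : ℝ) (ha : 0 < a) (ha1 : a < 1) (hε : 0 ≤ ε)
    (f : ℝ → ℝ) (hf_nonneg : ∀ x, 0 ≤ f x) (hf_bdd : ∀ x, f x ≤ M)
    (hf_int : Integrable f) (hf_one : ∫ x, f x = 1)
    (ψ : ℝ → ℝ)
    (hmed : ∀ y : ℝ, ∫ x in Set.Iic (ψ y), f x * Real.exp (-(x - y) ^ 2 / 2)
        = (1 / 2) * ∫ x, f x * Real.exp (-(x - y) ^ 2 / 2))
    (hsup : ∀ y : ℝ, |a * y - ψ y| ≤ Real.sqrt (2 * a * ε)) :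
    ∀ y : ℝ,
      |∫ x, f x * Real.sign (x - a * y) * Real.exp (-(x - y) ^ 2 / 2)| ≤
        2 * M * |a * y - ψ y| *
          Real.exp (-sInf ((fun x => (x - y) ^ 2 / 2) ''
            Set.Icc (a * y - Real.sqrt (2 * a * ε)) (a * y + Real.sqrt (2 * a * ε)))) := by
  intro y
  have hM : 0 ≤ M := le_trans (hf_nonneg 0) (hf_bdd 0)
  set r : ℝ := Real.sqrt (2 * a * ε) with hr
  have hr0 : 0 ≤ r := Real.sqrt_nonneg _
  set m : ℝ := sInf ((fun x => (x - y) ^ 2 / 2) '' Set.Icc (a * y - r) (a * y + r)) with hm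
  have hbdd : BddBelow ((fun x => (x - y) ^ 2 / 2) '' Set.Icc (a * y - r) (a * y + r)) := by
    refine ⟨0, ?_⟩
    rintro z ⟨x, -, rfl⟩
    positivity
  have hmle : ∀ x ∈ Set.Icc (a * y - r) (a * y + r), m ≤ (x - y) ^ 2 / 2 :=
    fun x hx => csInf_le hbdd ⟨x, hx, rfl⟩
  set g : ℝ → ℝ := fun x => f x * Real.exp (-(x - y) ^ 2 / 2) with hgdef
  have hg_meas : AEStronglyMeasurable g volume :=
    hf_int.aestronglyMeasurable.mul (Continuous.aestronglyMeasurable (by continuity))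
  have hg_int : Integrable g := by
    refine hf_int.mono hg_meas ?_
    filter_upwards with x
    rw [Real.norm_eq_abs, Real.norm_eq_abs, abs_of_nonneg (hf_nonneg x),
      abs_of_nonneg (mul_nonneg (hf_nonneg x) (Real.exp_pos _).le)]
    calc f x * Real.exp (-(x - y) ^ 2 / 2) ≤ f x * 1 := by
          gcongr
          · exact hf_nonneg x
          · exact Real.exp_le_one_iff.mpr (by nlinarith [sq_nonneg (x - y)])
      _ = f x := mul_one _
  -- rewrite the sign integrand a.e.
  have hae : ∀ᵐ x : ℝ, x ≠ a * y := by
    refine ae_iff.mpr ?_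
    have : {x : ℝ | ¬ x ≠ a * y} = {a * y} := by ext x; simp
    rw [this]
    exact volume_singleton
  have hsign : ∀ᵐ x : ℝ, f x * Real.sign (x - a * y) * Real.exp (-(x - y) ^ 2 / 2)
      = g x - 2 * Set.indicator (Set.Iic (a * y)) g x := by
    filter_upwards [hae] with x hx
    rcases hx.lt_or_gt with h | h
    · have hxm : x ∈ Set.Iic (a * y) := Set.mem_Iic.mpr h.le
      rw [Real.sign_of_neg (by linarith), Set.indicator_of_mem hxm]
      simp only [hgdef]; ring
    · rw [Real.sign_of_pos (by linarith), Set.indicator_of_notMem (by simpa using h.not_ge)]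
      simp only [hgdef]; ring
  have hind_int : Integrable (fun x => 2 * Set.indicator (Set.Iic (a * y)) g x) :=
    ((hg_int.indicator measurableSet_Iic).const_mul 2)
  have key : ∫ x, f x * Real.sign (x - a * y) * Real.exp (-(x - y) ^ 2 / 2)
      = 2 * ∫ x in (a * y)..(ψ y), g x := by
    rw [integral_congr_ae hsign, integral_sub hg_int hind_int, integral_const_mul,
      integral_indicator measurableSet_Iic]
    rw [← intervalIntegral.integral_Iic_sub_Iic (hg_int.integrableOn) (hg_int.integrableOn)]
    have h2 : ∫ x, g x = 2 * ∫ x in Set.Iic (ψ y), g x := by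
      have := hmed y
      simp only [hgdef]
      linarith [hmed y]
    rw [h2]; ring
  rw [key]
  have hbound : ∀ x ∈ Set.uIoc (a * y) (ψ y), ‖g x‖ ≤ M * Real.exp (-m) := by
    intro x hx
    have hx' : x ∈ Set.Icc (a * y - r) (a * y + r) := by
      have h1 := hsup y
      rcases Set.mem_uIoc.mp hx with ⟨h2, h3⟩ | ⟨h2, h3⟩
      · constructor
        · linarith
        · have : ψ y ≤ a * y + r := by
            have := abs_le.mp h1; linarith [this.1]
          linarith
      · constructor
        · have : a * y - r ≤ ψ y := by
            have := abs_le.mp h1; linarith [this.2]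
          linarith
        · linarith
    have hexp : Real.exp (-(x - y) ^ 2 / 2) ≤ Real.exp (-m) := by
      apply Real.exp_le_exp.mpr
      have := hmle x hx'
      linarith
    rw [Real.norm_eq_abs, abs_of_nonneg (mul_nonneg (hf_nonneg x) (Real.exp_pos _).le)]
    exact mul_le_mul (hf_bdd x) hexp (Real.exp_pos _).le hM
  have hnorm : |∫ x in (a * y)..(ψ y), g x| ≤ M * Real.exp (-m) * |ψ y - a * y| := by
    simpa using intervalIntegral.norm_integral_le_of_norm_le_const hbound
  have habs : |ψ y - a * y| = |a * y - ψ y| := abs_sub_comm _ _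
  calc |2 * ∫ x in (a * y)..(ψ y), g x| = 2 * |∫ x in (a * y)..(ψ y), g x| := by
        rw [abs_mul, abs_of_nonneg (by norm_num : (0:ℝ) ≤ 2)]
    _ ≤ 2 * (M * Real.exp (-m) * |ψ y - a * y|) := by linarith [hnorm]
    _ = 2 * M * |a * y - ψ y| * Real.exp (-m) := by rw [habs]; ring
end

section
/- Let a ∈ (0,1) and let f : ℝ → ℝ be measurable with x ↦ f(x)·e^{−(x−y)²/2} integrable for every y. Define f̃(x) = e^{(1−a)x²/(2a)}·f(x). Then for every y ∈ ℝ, e^{(1−a)y²/2}·T_a[f](y) = a·∫_ℝ f̃(ax)·sign(x − y)·exp(−a(x−y)²/2) dx = ∫_ℝ f̃(u)·sign(u − ay)·exp(−(u−ay)²/(2a)) du. -/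
/-!
Completing the square gives
`(1 - a) y² / 2 - (x - y)² / 2 = (1 - a) x² / (2a) - (x - ay)² / (2a)`,
so multiplying `T_a[f](y)` by `exp ((1 - a) y² / 2)` just moves the weight
`exp ((1 - a) x² / (2a))` onto `f` and recentres the Gaussian at `ay`: this is the second
formula. The first follows from it by the substitution `u = a x`, under which
`sign (u - a y) = sign (x - y)` because `a > 0`.
-/

open MeasureTheory Real

theorem Real.sign_mul_of_pos_left {a : ℝ} (ha : 0 < a) (t : ℝ) : sign (a * t) = sign t := by
  rcases lt_trichotomy t 0 with ht | rfl | ht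
  · rw [sign_of_neg ht, sign_of_neg (mul_neg_of_pos_of_neg ha ht)]
  · rw [mul_zero]
  · rw [sign_of_pos ht, sign_of_pos (mul_pos ha ht)]

theorem integral_comp_mul_left_of_pos {F : Type*} [NormedAddCommGroup F] [NormedSpace ℝ F]
    (g : ℝ → F) {a : ℝ} (ha : 0 < a) : a • ∫ x, g (a * x) = ∫ u, g u := by
  rw [Measure.integral_comp_mul_left, abs_of_pos (inv_pos.mpr ha), smul_smul,
    mul_inv_cancel₀ ha.ne', one_smul]

theorem exp_mul_exp_gaussian_complete_square {a : ℝ} (ha : a ≠ 0) (x y : ℝ) :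
    exp ((1 - a) * y ^ 2 / 2) * exp (-(x - y) ^ 2 / 2)
      = exp ((1 - a) * x ^ 2 / (2 * a)) * exp (-(x - a * y) ^ 2 / (2 * a)) := by
  rw [← exp_add, ← exp_add]
  congr 1
  field_simp
  ring

theorem stmt_14_general (a : ℝ) (ha : 0 < a)
    (f : ℝ → ℝ) :
    ∀ y : ℝ,
      (Real.exp ((1 - a) * y ^ 2 / 2) *
          ∫ x, f x * Real.sign (x - a * y) * Real.exp (-(x - y) ^ 2 / 2)
        = a * ∫ x, (Real.exp ((1 - a) * (a * x) ^ 2 / (2 * a)) * f (a * x)) *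
            Real.sign (x - y) * Real.exp (-a * (x - y) ^ 2 / 2)) ∧
      (Real.exp ((1 - a) * y ^ 2 / 2) *
          ∫ x, f x * Real.sign (x - a * y) * Real.exp (-(x - y) ^ 2 / 2)
        = ∫ u, (Real.exp ((1 - a) * u ^ 2 / (2 * a)) * f u) *
            Real.sign (u - a * y) * Real.exp (-(u - a * y) ^ 2 / (2 * a))) := by
  intro y
  set g : ℝ → ℝ := fun u => (exp ((1 - a) * u ^ 2 / (2 * a)) * f u) *
    sign (u - a * y) * exp (-(u - a * y) ^ 2 / (2 * a)) with hg
  have recentred : exp ((1 - a) * y ^ 2 / 2) *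
      ∫ x, f x * sign (x - a * y) * exp (-(x - y) ^ 2 / 2) = ∫ u, g u := by
    rw [← integral_const_mul]
    congr 1 with x
    linear_combination (f x * sign (x - a * y)) *
      exp_mul_exp_gaussian_complete_square ha.ne' x y
  have rescaled : ∀ x, (exp ((1 - a) * (a * x) ^ 2 / (2 * a)) * f (a * x)) *
      sign (x - y) * exp (-a * (x - y) ^ 2 / 2) = g (a * x) := by
    intro x
    simp only [hg, ← mul_sub, sign_mul_of_pos_left ha]
    congr 2
    field_simp
  refine ⟨?_, recentred⟩
  simp only [rescaled]
  rw [recentred, ← smul_eq_mul, integral_comp_mul_left_of_pos g ha]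

theorem stmt_14 (a : ℝ) (ha : 0 < a) (ha1 : a < 1)
    (f : ℝ → ℝ) (hf_meas : Measurable f)
    (hint : ∀ y : ℝ, Integrable fun x => f x * Real.exp (-(x - y) ^ 2 / 2)) :
    ∀ y : ℝ,
      (Real.exp ((1 - a) * y ^ 2 / 2) *
          ∫ x, f x * Real.sign (x - a * y) * Real.exp (-(x - y) ^ 2 / 2)
        = a * ∫ x, (Real.exp ((1 - a) * (a * x) ^ 2 / (2 * a)) * f (a * x)) *
            Real.sign (x - y) * Real.exp (-a * (x - y) ^ 2 / 2)) ∧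
      (Real.exp ((1 - a) * y ^ 2 / 2) *
          ∫ x, f x * Real.sign (x - a * y) * Real.exp (-(x - y) ^ 2 / 2)
        = ∫ u, (Real.exp ((1 - a) * u ^ 2 / (2 * a)) * f u) *
            Real.sign (u - a * y) * Real.exp (-(u - a * y) ^ 2 / (2 * a))) :=
  stmt_14_general a ha f
end

section
/- Let a ∈ (0,1), ε ≥ 0, B < ∞, M < ∞. Let X be a random variable with Lebesgue density f satisfying f(x) ≤ M for all x, and let ψ be the conditional median of X given Y (Y = X + Z, Z standard Gaussian independent of X). Suppose sup_y |ay − ψ(y)| ≤ √(2aε) and ∫_ℝ exp((1−a)y²/2 − min_{x ∈ [ay−√(2aε), ay+√(2aε)]} (x−y)²/2)·|ay − ψ(y)| dy ≤ B. Then there exists a finite constant C₀, depending only on a, M, B, ε, such that for every z ∈ ℝ, ∫_{z−1/2}^{z+1/2} e^{a(1−a)x²/2}·f(ax) dx ≤ C₀. -/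
/-!
Write `g(u) = e^{a(1-a)u²/2} f(au)`, `φ(t) = e^{-at²/2}` and `W(r) = ∫_r^∞ φ`, and smooth `g`
by `Q(c) = ∫ g(u) W(|u - c|) du`. On the window `|u - z| ≤ 1/2` the weight is at least
`W(1/2) > 0`, so it suffices to bound `Q(z)` uniformly in `z`. Formally
`Q'(y) = ∫_{u ≥ y} g(u) φ(u - y) du - ∫_{u < y} g(u) φ(u - y) du`, and the substitution `x = au`
turns this into `a⁻¹ e^{(1-a)y²/2}` times the difference of the masses of `f(x) e^{-(x-y)²/2}`
to the right and to the left of `ay`. As `ψ(y)` halves that mass, the difference is twice the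
mass between `ψ(y)` and `ay`, at most `2M e^{-min (x-y)²/2} |ay - ψ(y)|`. So `|Q'| ≤ 2Ma⁻¹ ρ`
with `ρ` the integrand of the hypothesis, whence `Q(z) ≤ Q(0) + 2Ma⁻¹B`; finally
`W(r) ≤ e^{-ar²/2} ∫ φ` bounds `Q(0)` by a Gaussian integral.
-/

open MeasureTheory Set
open scoped ENNReal

lemma ENNReal.le_add_of_add_eq_add {A B X Y E : ℝ≥0∞} (h : A + X = B + Y) (hY : Y ≤ X + E)
    (hX : X ≠ ∞) : A ≤ B + E := by
  refine (ENNReal.add_le_add_iff_right hX).1 ?_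
  calc A + X = B + Y := h
    _ ≤ B + (X + E) := by gcongr
    _ = B + E + X := by ring

lemma ENNReal.ofReal_le_ofReal_add_of_abs_sub_le {x y e : ℝ} (h : |x - y| ≤ e) :
    ENNReal.ofReal x ≤ ENNReal.ofReal y + ENNReal.ofReal e :=
  (ENNReal.ofReal_le_ofReal (by linarith [le_abs_self (x - y)])).trans ENNReal.ofReal_add_le

lemma ENNReal.le_ofReal_div_of_ofReal_mul_le {x : ℝ≥0∞} {t c : ℝ} (ht : 0 < t)
    (h : ENNReal.ofReal t * x ≤ ENNReal.ofReal c) : x ≤ ENNReal.ofReal (c / t) := by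
  rw [ENNReal.ofReal_div_of_pos ht, ENNReal.le_div_iff_mul_le
    (Or.inl (ENNReal.ofReal_pos.2 ht).ne') (Or.inl ENNReal.ofReal_ne_top), mul_comm]
  exact h

lemma setLIntegral_add_le {F : ℝ → ℝ≥0∞} (hF : AEMeasurable F) (e : ℝ → ℝ≥0∞) (s : Set ℝ) :
    ∫⁻ y in s, (F y + e y) ≤ (∫⁻ y in s, F y) + ∫⁻ y, e y := by
  rw [lintegral_add_left' hF.restrict]
  exact add_le_add le_rfl (setLIntegral_le_lintegral _ _)

lemma setLIntegral_ofReal_ne_top_of_le {F G : ℝ → ℝ} (hG : Continuous G) (h : ∀ y, F y ≤ G y)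
    (α β : ℝ) : ∫⁻ y in Ioc α β, ENNReal.ofReal (F y) ≠ ∞ :=
  ne_top_of_le_ne_top hG.integrableOn_Ioc.lintegral_lt_top.ne
    (lintegral_mono fun y => ENNReal.ofReal_le_ofReal (h y))

lemma setLIntegral_comp_mul_left {a : ℝ} (ha : 0 < a) (F : ℝ → ℝ≥0∞) (s : Set ℝ) :
    ∫⁻ u in (a * ·) ⁻¹' s, F (a * u) = ENNReal.ofReal a⁻¹ * ∫⁻ x in s, F x := by
  have hemb : MeasurableEmbedding (a * ·) := (Homeomorph.mulLeft₀ a ha.ne').measurableEmbedding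
  rw [← hemb.lintegral_map, ← hemb.restrict_map, Real.map_volume_mul_left ha.ne',
    Measure.restrict_smul, lintegral_smul_measure, abs_of_pos (inv_pos.2 ha), smul_eq_mul]

lemma exp_neg_sq_div_two_le_one (t : ℝ) : Real.exp (-t ^ 2 / 2) ≤ 1 :=
  Real.exp_le_one_iff.2 (by nlinarith [sq_nonneg t])

lemma integrable_mul_exp_neg_sq {f : ℝ → ℝ} (hf : Integrable f) (y : ℝ) :
    Integrable fun x => f x * Real.exp (-(x - y) ^ 2 / 2) :=
  hf.mul_bdd (c := 1)
    (by fun_prop : Continuous fun x => Real.exp (-(x - y) ^ 2 / 2)).aestronglyMeasurable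
    (.of_forall fun x => by
      rw [Real.norm_eq_abs, abs_of_pos (Real.exp_pos _)]
      exact exp_neg_sq_div_two_le_one _)

lemma abs_setIntegral_Ici_sub_setIntegral_Iio_le {F : ℝ → ℝ} (hF : Integrable F) {m c K : ℝ}
    (hm : ∫ x in Iic m, F x = (1 / 2) * ∫ x, F x) (hK : ∀ x ∈ uIcc m c, |F x| ≤ K) :
    |(∫ x in Ici c, F x) - ∫ x in Iio c, F x| ≤ 2 * K * |c - m| := by
  have hsplit := intervalIntegral.integral_Iio_add_Ici hF.integrableOn hF.integrableOn (b := c)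
  have hdiff := intervalIntegral.integral_Iic_sub_Iic hF.integrableOn hF.integrableOn
    (a := m) (b := c)
  rw [integral_Iic_eq_integral_Iio] at hdiff
  have hbound : ‖∫ x in m..c, F x‖ ≤ K * |c - m| :=
    intervalIntegral.norm_integral_le_of_norm_le_const fun x hx => hK x (uIoc_subset_uIcc hx)
  rw [Real.norm_eq_abs] at hbound
  have heq : (∫ x in Ici c, F x) - ∫ x in Iio c, F x = -2 * ∫ x in m..c, F x := by linarith
  rw [heq, abs_mul, abs_neg, abs_two]
  linarith

section TailIntegral

variable {k : ℝ → ℝ}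

noncomputable def tailIntegral (k : ℝ → ℝ) (r : ℝ) : ℝ := ∫ t in Ioi r, k t

lemma tailIntegral_sub_tailIntegral (hk : Integrable k) (p q : ℝ) :
    tailIntegral k p - tailIntegral k q = ∫ t in p..q, k t :=
  intervalIntegral.integral_Ioi_sub_Ioi' hk.integrableOn hk.integrableOn

lemma tailIntegral_add_tailIntegral_neg (hk : Integrable k) (hk_even : ∀ t, k (-t) = k t) (r : ℝ) :
    tailIntegral k r + tailIntegral k (-r) = ∫ t, k t := by
  have h : tailIntegral k (-r) = ∫ t in Iic r, k t := by
    rw [tailIntegral, ← integral_comp_neg_Iic]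
    simp only [hk_even]
  rw [h, add_comm]
  exact intervalIntegral.integral_Iic_add_Ioi hk.integrableOn hk.integrableOn

lemma setIntegral_Ioc_comp_sub_left (hk : Integrable k) {p q : ℝ} (hpq : p ≤ q) (u : ℝ) :
    ∫ y in Ioc p q, k (u - y) = tailIntegral k (u - q) - tailIntegral k (u - p) := by
  rw [← intervalIntegral.integral_of_le hpq, intervalIntegral.integral_comp_sub_left,
    tailIntegral_sub_tailIntegral hk]

/-- The fundamental theorem of calculus on `(α, β]` for `c ↦ tailIntegral k |u - c|`, whose
derivative is `sign (u - c) * k (u - c)`, with the positive and negative parts on different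
sides. -/
lemma tailIntegral_abs_sub_add_setIntegral_Ioc (hk : Integrable k) (hk_even : ∀ t, k (-t) = k t)
    {α β : ℝ} (hαβ : α ≤ β) (u : ℝ) :
    tailIntegral k |u - β| + ∫ y in Ioc (max α u) β, k (u - y)
      = tailIntegral k |u - α| + ∫ y in Ioc α (min β u), k (u - y) := by
  rcases le_total u α with huα | hαu
  · have hβ := tailIntegral_add_tailIntegral_neg hk hk_even (u - β)
    have hα := tailIntegral_add_tailIntegral_neg hk hk_even (u - α)
    rw [max_eq_left huα, min_eq_right (huα.trans hαβ), Ioc_eq_empty (not_lt.2 huα),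
      setIntegral_Ioc_comp_sub_left hk hαβ, abs_of_nonpos (by linarith),
      abs_of_nonpos (by linarith), neg_sub, neg_sub]
    rw [neg_sub] at hβ hα
    simp only [Measure.restrict_empty, integral_zero_measure]
    linarith
  rcases le_total β u with hβu | huβ
  · rw [max_eq_right hαu, min_eq_left hβu, Ioc_eq_empty (not_lt.2 hβu),
      setIntegral_Ioc_comp_sub_left hk hαβ, abs_of_nonneg (by linarith),
      abs_of_nonneg (by linarith)]
    simp only [Measure.restrict_empty, integral_zero_measure]
    ring
  · have hβ := tailIntegral_add_tailIntegral_neg hk hk_even (u - β)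
    have h0 := tailIntegral_add_tailIntegral_neg hk hk_even 0
    rw [max_eq_right hαu, min_eq_right huβ, setIntegral_Ioc_comp_sub_left hk huβ,
      setIntegral_Ioc_comp_sub_left hk hαu, abs_of_nonpos (by linarith),
      abs_of_nonneg (by linarith), neg_sub]
    rw [neg_sub] at hβ
    rw [neg_zero] at h0
    simp only [sub_self]
    linarith

lemma tailIntegral_nonneg (hk0 : 0 ≤ k) (r : ℝ) : 0 ≤ tailIntegral k r :=
  setIntegral_nonneg measurableSet_Ioi fun t _ => hk0 t

lemma tailIntegral_antitone (hk : Integrable k) (hk0 : 0 ≤ k) : Antitone (tailIntegral k) :=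
  fun _ _ hpq =>
    setIntegral_mono_set hk.integrableOn (.of_forall hk0) (Ioi_subset_Ioi hpq).eventuallyLE

lemma tailIntegral_pos (hk : Integrable k) (hk_pos : ∀ t, 0 < k t) (r : ℝ) :
    0 < tailIntegral k r := by
  rw [tailIntegral, setIntegral_pos_iff_support_of_nonneg_ae (.of_forall fun t => (hk_pos t).le)
    hk.integrableOn]
  simp [Function.support, (hk_pos _).ne']

end TailIntegral

section Smoothing

variable {k : ℝ → ℝ} {g : ℝ → ℝ≥0∞}

noncomputable def tailSmoothing (k : ℝ → ℝ) (g : ℝ → ℝ≥0∞) (c : ℝ) : ℝ≥0∞ :=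
  ∫⁻ u, g u * ENNReal.ofReal (tailIntegral k |u - c|)

noncomputable def leftConv (k : ℝ → ℝ) (g : ℝ → ℝ≥0∞) (y : ℝ) : ℝ≥0∞ :=
  ∫⁻ u in Iio y, g u * ENNReal.ofReal (k (u - y))

noncomputable def rightConv (k : ℝ → ℝ) (g : ℝ → ℝ≥0∞) (y : ℝ) : ℝ≥0∞ :=
  ∫⁻ u in Ici y, g u * ENNReal.ofReal (k (u - y))

lemma lintegral_slice_eq_lintegral_indicator (T : Set (ℝ × ℝ)) (hT : MeasurableSet T) (y : ℝ) :
    ∫⁻ u in {u | (y, u) ∈ T}, g u * ENNReal.ofReal (k (u - y))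
      = ∫⁻ u, T.indicator (fun p => g p.2 * ENNReal.ofReal (k (p.2 - p.1))) (y, u) :=
  (lintegral_indicator (hT.preimage measurable_prodMk_left) _).symm

lemma aemeasurable_kernel_indicator (hk_meas : Measurable k) (hg : AEMeasurable g)
    {T : Set (ℝ × ℝ)} (hT : MeasurableSet T) (μ : Measure ℝ) :
    AEMeasurable (T.indicator fun p => g p.2 * ENNReal.ofReal (k (p.2 - p.1)))
      (μ.prod volume) :=
  (hg.comp_snd.mul (hk_meas.comp (measurable_snd.sub measurable_fst)).ennreal_ofReal.aemeasurable
    ).indicator hT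

lemma aemeasurable_lintegral_slice (hk_meas : Measurable k) (hg : AEMeasurable g)
    {T : Set (ℝ × ℝ)} (hT : MeasurableSet T) :
    AEMeasurable fun y => ∫⁻ u in {u | (y, u) ∈ T}, g u * ENNReal.ofReal (k (u - y)) := by
  simp_rw [lintegral_slice_eq_lintegral_indicator T hT]
  exact (aemeasurable_kernel_indicator hk_meas hg hT volume).lintegral_prod_right'

lemma setLIntegral_lintegral_slice (hk : Integrable k) (hk_meas : Measurable k) (hk0 : 0 ≤ k)
    (hg : AEMeasurable g) {T : Set (ℝ × ℝ)} (hT : MeasurableSet T) (s : Set ℝ) :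
    ∫⁻ y in s, ∫⁻ u in {u | (y, u) ∈ T}, g u * ENNReal.ofReal (k (u - y))
      = ∫⁻ u, g u * ENNReal.ofReal (∫ y in s ∩ {y | (y, u) ∈ T}, k (u - y)) := by
  simp_rw [lintegral_slice_eq_lintegral_indicator T hT]
  rw [lintegral_lintegral_swap (f := fun y u =>
    T.indicator (fun p => g p.2 * ENNReal.ofReal (k (p.2 - p.1))) (y, u))
    (aemeasurable_kernel_indicator hk_meas hg hT _)]
  refine lintegral_congr fun u => ?_
  have hk_slice : Measurable fun y => ENNReal.ofReal (k (u - y)) := by fun_prop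
  have hT_slice : MeasurableSet {y : ℝ | (y, u) ∈ T} := hT.preimage measurable_prodMk_right
  rw [ofReal_integral_eq_lintegral_ofReal (hk.comp_sub_left u).integrableOn
      (.of_forall fun y => hk0 (u - y)),
    inter_comm, ← Measure.restrict_restrict hT_slice, ← lintegral_const_mul _ hk_slice,
    ← lintegral_indicator hT_slice]
  rfl

lemma setLIntegral_leftConv (hk : Integrable k) (hk_meas : Measurable k) (hk0 : 0 ≤ k)
    (hg : AEMeasurable g) (α β : ℝ) :
    ∫⁻ y in Ioc α β, leftConv k g y
      = ∫⁻ u, g u * ENNReal.ofReal (∫ y in Ioc (max α u) β, k (u - y)) := by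
  have hslice : ∀ y, leftConv k g y = ∫⁻ u in {u | (y, u) ∈ {p : ℝ × ℝ | p.2 < p.1}},
      g u * ENNReal.ofReal (k (u - y)) := fun _ => rfl
  simp_rw [hslice]
  rw [setLIntegral_lintegral_slice hk hk_meas hk0 hg
    (measurableSet_lt measurable_snd measurable_fst)]
  refine lintegral_congr fun u => ?_
  congr 4
  ext y
  simp only [mem_inter_iff, mem_Ioc, mem_ofPred_eq, max_lt_iff]
  tauto

lemma setLIntegral_rightConv (hk : Integrable k) (hk_meas : Measurable k) (hk0 : 0 ≤ k)
    (hg : AEMeasurable g) (α β : ℝ) :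
    ∫⁻ y in Ioc α β, rightConv k g y
      = ∫⁻ u, g u * ENNReal.ofReal (∫ y in Ioc α (min β u), k (u - y)) := by
  have hslice : ∀ y, rightConv k g y = ∫⁻ u in {u | (y, u) ∈ {p : ℝ × ℝ | p.1 ≤ p.2}},
      g u * ENNReal.ofReal (k (u - y)) := fun _ => rfl
  simp_rw [hslice]
  rw [setLIntegral_lintegral_slice hk hk_meas hk0 hg
    (measurableSet_le measurable_fst measurable_snd)]
  refine lintegral_congr fun u => ?_
  congr 4
  ext y
  simp only [mem_inter_iff, mem_Ioc, mem_ofPred_eq, le_min_iff]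
  tauto

/-- `Q β - Q α = ∫_α^β (rightConv - leftConv)` for `Q = tailSmoothing k g`, obtained by Tonelli
from `tailIntegral_abs_sub_add_setIntegral_Ioc` and written without subtracting possibly infinite
terms. -/
lemma tailSmoothing_add_setLIntegral_leftConv (hk : Integrable k) (hk_even : ∀ t, k (-t) = k t)
    (hk_meas : Measurable k) (hk0 : 0 ≤ k) (hg : AEMeasurable g) {α β : ℝ} (hαβ : α ≤ β) :
    tailSmoothing k g β + ∫⁻ y in Ioc α β, leftConv k g y
      = tailSmoothing k g α + ∫⁻ y in Ioc α β, rightConv k g y := by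
  have hmeas : ∀ c, AEMeasurable fun u => g u * ENNReal.ofReal (tailIntegral k |u - c|) := fun c =>
    hg.mul ((tailIntegral_antitone hk hk0).measurable.comp
      (measurable_id.sub_const c).abs).ennreal_ofReal.aemeasurable
  rw [tailSmoothing, tailSmoothing, setLIntegral_leftConv hk hk_meas hk0 hg,
    setLIntegral_rightConv hk hk_meas hk0 hg, ← lintegral_add_left' (hmeas β),
    ← lintegral_add_left' (hmeas α)]
  refine lintegral_congr fun u => ?_
  have hIoc : ∀ p q, 0 ≤ ∫ y in Ioc p q, k (u - y) := fun p q =>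
    setIntegral_nonneg measurableSet_Ioc fun y _ => hk0 (u - y)
  rw [← mul_add, ← mul_add, ← ENNReal.ofReal_add (tailIntegral_nonneg hk0 _) (hIoc _ _),
    ← ENNReal.ofReal_add (tailIntegral_nonneg hk0 _) (hIoc _ _),
    tailIntegral_abs_sub_add_setIntegral_Ioc hk hk_even hαβ u]

lemma tailSmoothing_le_add (hk : Integrable k) (hk_even : ∀ t, k (-t) = k t)
    (hk_meas : Measurable k) (hk0 : 0 ≤ k) (hg : AEMeasurable g) {e : ℝ → ℝ≥0∞}
    (hRL : ∀ y, rightConv k g y ≤ leftConv k g y + e y)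
    (hLR : ∀ y, leftConv k g y ≤ rightConv k g y + e y)
    (hL : ∀ α β, ∫⁻ y in Ioc α β, leftConv k g y ≠ ∞)
    (hR : ∀ α β, ∫⁻ y in Ioc α β, rightConv k g y ≠ ∞) (c c' : ℝ) :
    tailSmoothing k g c' ≤ tailSmoothing k g c + ∫⁻ y, e y := by
  have hL_meas : AEMeasurable (leftConv k g) :=
    aemeasurable_lintegral_slice hk_meas hg (measurableSet_lt measurable_snd measurable_fst)
  have hR_meas : AEMeasurable (rightConv k g) :=
    aemeasurable_lintegral_slice hk_meas hg (measurableSet_le measurable_fst measurable_snd)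
  rcases le_total c c' with h | h
  · refine ENNReal.le_add_of_add_eq_add
      (tailSmoothing_add_setLIntegral_leftConv hk hk_even hk_meas hk0 hg h) ?_ (hL c c')
    exact (lintegral_mono hRL).trans (setLIntegral_add_le hL_meas e _)
  · refine ENNReal.le_add_of_add_eq_add
      (tailSmoothing_add_setLIntegral_leftConv hk hk_even hk_meas hk0 hg h).symm ?_ (hR c' c)
    exact (lintegral_mono hLR).trans (setLIntegral_add_le hR_meas e _)

lemma ofReal_tailIntegral_mul_setLIntegral_Icc_le (hk : Integrable k) (hk0 : 0 ≤ k) (c r : ℝ) :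
    ENNReal.ofReal (tailIntegral k r) * ∫⁻ u in Icc (c - r) (c + r), g u ≤ tailSmoothing k g c := by
  rw [← lintegral_const_mul' _ _ ENNReal.ofReal_ne_top]
  refine (setLIntegral_mono' measurableSet_Icc fun u hu => ?_).trans
    (setLIntegral_le_lintegral _ _)
  rw [mul_comm]
  gcongr
  exact tailIntegral_antitone hk hk0 (abs_sub_le_iff.2 ⟨by linarith [hu.2], by linarith [hu.1]⟩)

end Smoothing

section Gaussian

variable {a : ℝ}

noncomputable def gaussKernel (a t : ℝ) : ℝ := Real.exp (-(a / 2) * t ^ 2)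

lemma gaussKernel_pos (a t : ℝ) : 0 < gaussKernel a t := Real.exp_pos _

lemma gaussKernel_nonneg (a : ℝ) : 0 ≤ gaussKernel a := fun t => (gaussKernel_pos a t).le

lemma gaussKernel_neg (a t : ℝ) : gaussKernel a (-t) = gaussKernel a t := by
  simp [gaussKernel]

lemma continuous_gaussKernel (a : ℝ) : Continuous (gaussKernel a) := by
  unfold gaussKernel; fun_prop

lemma integrable_gaussKernel (ha : 0 < a) : Integrable (gaussKernel a) :=
  integrable_exp_neg_mul_sq (half_pos ha)

/-- From `t ^ 2 ≥ r ^ 2 + (t - r) ^ 2` for `t ≥ r ≥ 0`. -/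
lemma tailIntegral_gaussKernel_le (ha : 0 < a) {r : ℝ} (hr : 0 ≤ r) :
    tailIntegral (gaussKernel a) r ≤ gaussKernel a r * ∫ t, gaussKernel a t := by
  have hshift : Integrable fun t => gaussKernel a r * gaussKernel a (t - r) :=
    ((integrable_gaussKernel ha).comp_sub_right r).const_mul _
  calc tailIntegral (gaussKernel a) r
      ≤ ∫ t in Ioi r, gaussKernel a r * gaussKernel a (t - r) := by
        refine setIntegral_mono_on (integrable_gaussKernel ha).integrableOn hshift.integrableOn
          measurableSet_Ioi fun t (ht : r < t) => ?_
        rw [gaussKernel, gaussKernel, gaussKernel, ← Real.exp_add]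
        gcongr
        nlinarith [mul_nonneg ha.le (mul_nonneg hr (sub_nonneg.2 ht.le))]
    _ ≤ ∫ t, gaussKernel a r * gaussKernel a (t - r) :=
        setIntegral_le_integral hshift
          (.of_forall fun t => (mul_pos (gaussKernel_pos a r) (gaussKernel_pos a _)).le)
    _ = gaussKernel a r * ∫ t, gaussKernel a t := by
        rw [integral_const_mul, integral_sub_right_eq_self (gaussKernel a) r]

end Gaussian

section Tilted

variable {a M : ℝ} {f : ℝ → ℝ}

/-- `tilted a f u = f̃ (a * u)` for the paper's `f̃ x = e^{(1-a)x²/(2a)} f x`. -/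
noncomputable def tilted (a : ℝ) (f : ℝ → ℝ) (u : ℝ) : ℝ :=
  Real.exp (a * (1 - a) * u ^ 2 / 2) * f (a * u)

noncomputable def weightedMedianGap (a δ y m : ℝ) : ℝ :=
  Real.exp ((1 - a) * y ^ 2 / 2 -
    sInf ((fun x => (x - y) ^ 2 / 2) '' Icc (a * y - δ) (a * y + δ))) * |a * y - m|

lemma aemeasurable_tilted (ha : 0 < a) (hf : Integrable f) :
    AEMeasurable fun u => ENNReal.ofReal (tilted a f u) :=
  ((by fun_prop : Continuous fun u => Real.exp (a * (1 - a) * u ^ 2 / 2)).aemeasurable.mul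
    (hf.aemeasurable.comp_quasiMeasurePreserving
      (Measure.quasiMeasurePreserving_smul volume ha.ne'))).ennreal_ofReal

lemma tilted_mul_gaussKernel (a : ℝ) (f : ℝ → ℝ) (u y : ℝ) :
    tilted a f u * gaussKernel a (u - y)
      = Real.exp ((1 - a) * y ^ 2 / 2) * (f (a * u) * Real.exp (-(a * u - y) ^ 2 / 2)) := by
  rw [tilted, gaussKernel, mul_comm (Real.exp _) (f _), mul_assoc, ← Real.exp_add,
    mul_left_comm, ← Real.exp_add]
  ring_nf

lemma setLIntegral_tilted_mul_gaussKernel (ha : 0 < a) (hf0 : 0 ≤ f) (hf : Integrable f)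
    (y : ℝ) (s : Set ℝ) :
    ∫⁻ u in (a * ·) ⁻¹' s,
        ENNReal.ofReal (tilted a f u) * ENNReal.ofReal (gaussKernel a (u - y))
      = ENNReal.ofReal (a⁻¹ * Real.exp ((1 - a) * y ^ 2 / 2)
          * ∫ x in s, f x * Real.exp (-(x - y) ^ 2 / 2)) := by
  simp_rw [← ENNReal.ofReal_mul' (gaussKernel_pos a _).le, tilted_mul_gaussKernel,
    ENNReal.ofReal_mul (Real.exp_pos _).le]
  rw [lintegral_const_mul' _ _ ENNReal.ofReal_ne_top,
    setLIntegral_comp_mul_left ha (fun x => ENNReal.ofReal (f x * Real.exp (-(x - y) ^ 2 / 2))),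
    ← ofReal_integral_eq_lintegral_ofReal (integrable_mul_exp_neg_sq hf y).integrableOn
      (.of_forall fun x => mul_nonneg (hf0 x) (Real.exp_pos _).le),
    ENNReal.ofReal_mul (mul_nonneg (inv_pos.2 ha).le (Real.exp_pos _).le),
    ENNReal.ofReal_mul (inv_pos.2 ha).le]
  ring

lemma rightConv_tilted (ha : 0 < a) (hf0 : 0 ≤ f) (hf : Integrable f) (y : ℝ) :
    rightConv (gaussKernel a) (fun u => ENNReal.ofReal (tilted a f u)) y
      = ENNReal.ofReal (a⁻¹ * Real.exp ((1 - a) * y ^ 2 / 2)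
          * ∫ x in Ici (a * y), f x * Real.exp (-(x - y) ^ 2 / 2)) := by
  have hpre : Ici y = (a * ·) ⁻¹' Ici (a * y) := by
    rw [preimage_const_mul_Ici₀ _ ha, mul_div_cancel_left₀ _ ha.ne']
  rw [rightConv, hpre, setLIntegral_tilted_mul_gaussKernel ha hf0 hf]

lemma leftConv_tilted (ha : 0 < a) (hf0 : 0 ≤ f) (hf : Integrable f) (y : ℝ) :
    leftConv (gaussKernel a) (fun u => ENNReal.ofReal (tilted a f u)) y
      = ENNReal.ofReal (a⁻¹ * Real.exp ((1 - a) * y ^ 2 / 2)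
          * ∫ x in Iio (a * y), f x * Real.exp (-(x - y) ^ 2 / 2)) := by
  have hpre : Iio y = (a * ·) ⁻¹' Iio (a * y) := by
    rw [preimage_const_mul_Iio₀ _ ha, mul_div_cancel_left₀ _ ha.ne']
  rw [leftConv, hpre, setLIntegral_tilted_mul_gaussKernel ha hf0 hf]

lemma abs_sub_le_weightedMedianGap (ha : 0 < a) (hf0 : 0 ≤ f) (hfM : ∀ x, f x ≤ M)
    (hf : Integrable f) {δ y m : ℝ}
    (hm : ∫ x in Iic m, f x * Real.exp (-(x - y) ^ 2 / 2)
      = (1 / 2) * ∫ x, f x * Real.exp (-(x - y) ^ 2 / 2))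
    (hmδ : |a * y - m| ≤ δ) :
    |a⁻¹ * Real.exp ((1 - a) * y ^ 2 / 2) * (∫ x in Ici (a * y), f x * Real.exp (-(x - y) ^ 2 / 2))
      - a⁻¹ * Real.exp ((1 - a) * y ^ 2 / 2)
        * ∫ x in Iio (a * y), f x * Real.exp (-(x - y) ^ 2 / 2)|
      ≤ 2 * M * a⁻¹ * weightedMedianGap a δ y m := by
  set μ := sInf ((fun x => (x - y) ^ 2 / 2) '' Icc (a * y - δ) (a * y + δ))
  have hM : 0 ≤ M := (hf0 0).trans (hfM 0)
  have hK : ∀ x ∈ uIcc m (a * y), |f x * Real.exp (-(x - y) ^ 2 / 2)| ≤ M * Real.exp (-μ) := by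
    intro x hx
    have hmem : x ∈ Icc (a * y - δ) (a * y + δ) := uIcc_subset_Icc
      ⟨by linarith [(abs_le.1 hmδ).2], by linarith [(abs_le.1 hmδ).1]⟩
      ⟨by linarith [abs_nonneg (a * y - m)], by linarith [abs_nonneg (a * y - m)]⟩ hx
    have hμ : μ ≤ (x - y) ^ 2 / 2 :=
      csInf_le ⟨0, by rintro _ ⟨x', _, rfl⟩; positivity⟩ ⟨x, hmem, rfl⟩
    rw [abs_of_nonneg (mul_nonneg (hf0 x) (Real.exp_pos _).le)]
    exact mul_le_mul (hfM x) (Real.exp_le_exp.2 (by linarith)) (Real.exp_pos _).le hM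
  have hS : 0 < a⁻¹ * Real.exp ((1 - a) * y ^ 2 / 2) := by positivity
  rw [← mul_sub, abs_mul, abs_of_pos hS]
  calc a⁻¹ * Real.exp ((1 - a) * y ^ 2 / 2)
        * |(∫ x in Ici (a * y), f x * Real.exp (-(x - y) ^ 2 / 2))
          - ∫ x in Iio (a * y), f x * Real.exp (-(x - y) ^ 2 / 2)|
      ≤ a⁻¹ * Real.exp ((1 - a) * y ^ 2 / 2) * (2 * (M * Real.exp (-μ)) * |a * y - m|) := by
        gcongr
        exact abs_setIntegral_Ici_sub_setIntegral_Iio_le (integrable_mul_exp_neg_sq hf y) hm hK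
    _ = 2 * M * a⁻¹ * weightedMedianGap a δ y m := by
        rw [weightedMedianGap, Real.exp_sub, Real.exp_neg]
        ring

lemma setLIntegral_ofReal_tiltedConv_ne_top (ha : 0 < a) (hf0 : 0 ≤ f) (hf : Integrable f)
    (s : ℝ → Set ℝ) (α β : ℝ) :
    ∫⁻ y in Ioc α β, ENNReal.ofReal (a⁻¹ * Real.exp ((1 - a) * y ^ 2 / 2)
      * ∫ x in s y, f x * Real.exp (-(x - y) ^ 2 / 2)) ≠ ∞ := by
  refine setLIntegral_ofReal_ne_top_of_le
    (G := fun y => a⁻¹ * Real.exp ((1 - a) * y ^ 2 / 2) * ∫ x, f x) (by fun_prop)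
    (fun y => ?_) α β
  gcongr
  refine (setIntegral_le_integral (integrable_mul_exp_neg_sq hf y)
    (.of_forall fun x => mul_nonneg (hf0 x) (Real.exp_pos _).le)).trans
    (integral_mono (integrable_mul_exp_neg_sq hf y) hf fun x => ?_)
  exact mul_le_of_le_one_right (hf0 x) (exp_neg_sq_div_two_le_one _)

lemma tailSmoothing_tilted_le_add (ha : 0 < a) (hf0 : 0 ≤ f) (hfM : ∀ x, f x ≤ M)
    (hf : Integrable f) {δ : ℝ} {ψ : ℝ → ℝ}
    (hmed : ∀ y, ∫ x in Iic (ψ y), f x * Real.exp (-(x - y) ^ 2 / 2)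
      = (1 / 2) * ∫ x, f x * Real.exp (-(x - y) ^ 2 / 2))
    (hsup : ∀ y, |a * y - ψ y| ≤ δ) (c c' : ℝ) :
    tailSmoothing (gaussKernel a) (fun u => ENNReal.ofReal (tilted a f u)) c'
      ≤ tailSmoothing (gaussKernel a) (fun u => ENNReal.ofReal (tilted a f u)) c
        + ∫⁻ y, ENNReal.ofReal (2 * M * a⁻¹ * weightedMedianGap a δ y (ψ y)) := by
  have hgap := fun y => abs_sub_le_weightedMedianGap ha hf0 hfM hf (hmed y) (hsup y)
  refine tailSmoothing_le_add (integrable_gaussKernel ha) (gaussKernel_neg a)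
    (continuous_gaussKernel a).measurable (gaussKernel_nonneg a) (aemeasurable_tilted ha hf)
    (fun y => ?_) (fun y => ?_) (fun α β => ?_) (fun α β => ?_) c c'
  · rw [rightConv_tilted ha hf0 hf, leftConv_tilted ha hf0 hf]
    exact ENNReal.ofReal_le_ofReal_add_of_abs_sub_le (hgap y)
  · rw [rightConv_tilted ha hf0 hf, leftConv_tilted ha hf0 hf]
    exact ENNReal.ofReal_le_ofReal_add_of_abs_sub_le ((abs_sub_comm _ _).trans_le (hgap y))
  · simp_rw [leftConv_tilted ha hf0 hf]
    exact setLIntegral_ofReal_tiltedConv_ne_top ha hf0 hf _ α β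
  · simp_rw [rightConv_tilted ha hf0 hf]
    exact setLIntegral_ofReal_tiltedConv_ne_top ha hf0 hf _ α β

lemma tailSmoothing_tilted_zero_le (ha : 0 < a) (hM : 0 ≤ M) (hfM : ∀ x, f x ≤ M) :
    tailSmoothing (gaussKernel a) (fun u => ENNReal.ofReal (tilted a f u)) 0
      ≤ ENNReal.ofReal (M * (∫ t, gaussKernel a t) * ∫ t, gaussKernel (a ^ 2) t) := by
  have hI : 0 ≤ ∫ t, gaussKernel a t := integral_nonneg (gaussKernel_nonneg a)
  have hpt : ∀ u, tilted a f u * tailIntegral (gaussKernel a) |u - 0|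
      ≤ M * (∫ t, gaussKernel a t) * gaussKernel (a ^ 2) u := by
    intro u
    rw [sub_zero]
    calc tilted a f u * tailIntegral (gaussKernel a) |u|
        ≤ (Real.exp (a * (1 - a) * u ^ 2 / 2) * M)
            * (gaussKernel a |u| * ∫ t, gaussKernel a t) :=
          mul_le_mul (mul_le_mul_of_nonneg_left (hfM _) (Real.exp_pos _).le)
            (tailIntegral_gaussKernel_le ha (abs_nonneg u))
            (tailIntegral_nonneg (gaussKernel_nonneg a) _) (by positivity)
      _ = M * (∫ t, gaussKernel a t) * gaussKernel (a ^ 2) u := by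
          rw [gaussKernel, gaussKernel, sq_abs, mul_mul_mul_comm, ← Real.exp_add]
          ring_nf
  have hint : Integrable fun u => M * (∫ t, gaussKernel a t) * gaussKernel (a ^ 2) u :=
    (integrable_gaussKernel (by positivity)).const_mul _
  calc tailSmoothing (gaussKernel a) (fun u => ENNReal.ofReal (tilted a f u)) 0
      ≤ ∫⁻ u, ENNReal.ofReal (M * (∫ t, gaussKernel a t) * gaussKernel (a ^ 2) u) :=
        lintegral_mono fun u => by
          rw [← ENNReal.ofReal_mul' (tailIntegral_nonneg (gaussKernel_nonneg a) _)]
          exact ENNReal.ofReal_le_ofReal (hpt u)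
    _ = ENNReal.ofReal (M * (∫ t, gaussKernel a t) * ∫ t, gaussKernel (a ^ 2) t) := by
        rw [← ofReal_integral_eq_lintegral_ofReal hint
          (.of_forall fun u => by have := gaussKernel_pos (a ^ 2) u; positivity),
          integral_const_mul]

end Tilted

theorem stmt_15_general (a ε B M : ℝ) (ha : 0 < a) :
    ∃ C₀ : ℝ, ∀ (f ψ : ℝ → ℝ),
      (∀ x, 0 ≤ f x) → (∀ x, f x ≤ M) → Integrable f → (∫ x, f x = 1) →
      (∀ y : ℝ, ∫ x in Set.Iic (ψ y), f x * Real.exp (-(x - y) ^ 2 / 2)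
          = (1 / 2) * ∫ x, f x * Real.exp (-(x - y) ^ 2 / 2)) →
      (∀ y : ℝ, |a * y - ψ y| ≤ Real.sqrt (2 * a * ε)) →
      (∫⁻ y : ℝ, ENNReal.ofReal
          (Real.exp ((1 - a) * y ^ 2 / 2 -
              sInf ((fun x => (x - y) ^ 2 / 2) ''
                Set.Icc (a * y - Real.sqrt (2 * a * ε)) (a * y + Real.sqrt (2 * a * ε)))) *
            |a * y - ψ y|) ≤ ENNReal.ofReal B) →
      ∀ z : ℝ,
        ∫⁻ x in Set.Icc (z - 1 / 2) (z + 1 / 2),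
            ENNReal.ofReal (Real.exp (a * (1 - a) * x ^ 2 / 2) * f (a * x))
          ≤ ENNReal.ofReal C₀ := by
  set I := fun b => ∫ t, gaussKernel b t
  have hI : ∀ b, 0 ≤ I b := fun b => integral_nonneg (gaussKernel_nonneg b)
  refine ⟨(M * I a * I (a ^ 2) + 2 * M * a⁻¹ * max B 0) / tailIntegral (gaussKernel a) (1 / 2), ?_⟩
  intro f ψ hf0 hfM hf _ hmed hsup hB z
  have hM : 0 ≤ M := (hf0 0).trans (hfM 0)
  have hc : 0 ≤ 2 * M * a⁻¹ := by positivity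
  have hgap : ∫⁻ y, ENNReal.ofReal (2 * M * a⁻¹ * weightedMedianGap a √(2 * a * ε) y (ψ y))
      ≤ ENNReal.ofReal (2 * M * a⁻¹ * max B 0) := by
    simp only [ENNReal.ofReal_mul hc]
    rw [lintegral_const_mul' _ _ ENNReal.ofReal_ne_top]
    exact mul_le_mul_right (hB.trans (ENNReal.ofReal_le_ofReal (le_max_left B 0))) _
  refine ENNReal.le_ofReal_div_of_ofReal_mul_le
    (tailIntegral_pos (integrable_gaussKernel ha) (gaussKernel_pos a) _) ?_
  rw [ENNReal.ofReal_add (mul_nonneg (mul_nonneg hM (hI a)) (hI (a ^ 2)))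
    (mul_nonneg hc (le_max_right B 0))]
  calc _ ≤ tailSmoothing (gaussKernel a) (fun u => ENNReal.ofReal (tilted a f u)) z :=
        ofReal_tailIntegral_mul_setLIntegral_Icc_le (integrable_gaussKernel ha)
          (gaussKernel_nonneg a) z _
    _ ≤ _ := tailSmoothing_tilted_le_add ha hf0 hfM hf hmed hsup 0 z
    _ ≤ _ := add_le_add (tailSmoothing_tilted_zero_le ha hM hfM) hgap

theorem stmt_15 (a ε B M : ℝ) (ha : 0 < a) (ha1 : a < 1) (hε : 0 ≤ ε) :
    ∃ C₀ : ℝ, ∀ (f ψ : ℝ → ℝ),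
      (∀ x, 0 ≤ f x) → (∀ x, f x ≤ M) → Integrable f → (∫ x, f x = 1) →
      (∀ y : ℝ, ∫ x in Set.Iic (ψ y), f x * Real.exp (-(x - y) ^ 2 / 2)
          = (1 / 2) * ∫ x, f x * Real.exp (-(x - y) ^ 2 / 2)) →
      (∀ y : ℝ, |a * y - ψ y| ≤ Real.sqrt (2 * a * ε)) →
      (∫⁻ y : ℝ, ENNReal.ofReal
          (Real.exp ((1 - a) * y ^ 2 / 2 -
              sInf ((fun x => (x - y) ^ 2 / 2) ''
                Set.Icc (a * y - Real.sqrt (2 * a * ε)) (a * y + Real.sqrt (2 * a * ε)))) *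
            |a * y - ψ y|) ≤ ENNReal.ofReal B) →
      ∀ z : ℝ,
        ∫⁻ x in Set.Icc (z - 1 / 2) (z + 1 / 2),
            ENNReal.ofReal (Real.exp (a * (1 - a) * x ^ 2 / 2) * f (a * x))
          ≤ ENNReal.ofReal C₀ :=
  stmt_15_general a ε B M ha
end

section
/- Let a ∈ (0,1), let f : ℝ → [0,∞) be measurable with f̃(x) = e^{(1−a)x²/(2a)}·f(x) satisfying sup_{z∈ℝ} ∫_{z−1/2}^{z+1/2} f̃(ax) dx ≤ C₀ < ∞, and let φ : ℝ → ℂ be measurable with ∫_ℝ |φ(y)|·e^{−(1−a)y²/2} dy < ∞. Then the double integral ∫∫ f(x)·sign(x − ay)·exp(−(x−y)²/2)·φ(y) dx dy is absolutely convergent, and consequently ∫_ℝ T_a[f](y)·φ(y) dy = ∫_ℝ f(x)·(∫_ℝ sign(x − ay)·exp(−(x−y)²/2)·φ(y) dy) dx. -/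
/-!
The Gaussian kernel factors as
`e^{-(au - y)²/2} = e^{-(1-a)y²/2} · e^{(1-a)(au)²/(2a)} · e^{-a(u - y)²/2}`,
so after substituting `x = au` the `x`-integral of `|f(x) sign(x - ay) e^{-(x-y)²/2}|` is at most
`e^{-(1-a)y²/2}` times the integral of `f̃(a·)` against a Gaussian centred at `y`. The latter is
bounded uniformly in `y`: on each window `|u - z| ≤ 1/2` the Gaussian is dominated by a wider
Gaussian in `z`, and swapping the integrals (Tonelli) leaves the window integrals of `f̃(a·)`,
each at most `C₀`. Integrating against `|φ|` gives absolute convergence, and Fubini the identity.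
-/

open MeasureTheory Real Set

open scoped ENNReal

@[fun_prop]
theorem Real.measurable_sign : Measurable Real.sign :=
  Measurable.ite measurableSet_Iio measurable_const
    (Measurable.ite measurableSet_Ioi measurable_const measurable_const)

theorem Real.abs_mul_sign_mul_le (x s y : ℝ) : |x * Real.sign s * y| ≤ |x * y| := by
  have hs : |Real.sign s| ≤ 1 := by
    rcases Real.sign_apply_eq s with h | h | h <;> simp [h]
  rw [abs_mul, abs_mul, abs_mul]
  exact mul_le_mul_of_nonneg_right (mul_le_of_le_one_right (abs_nonneg x) hs) (abs_nonneg y)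

theorem exp_neg_sq_sub_div_two_eq_mul (a u y : ℝ) :
    exp (-(a * u - y) ^ 2 / 2) = exp (-(1 - a) * y ^ 2 / 2) *
      (exp ((1 - a) * (a * u) ^ 2 / (2 * a)) * exp (-(a / 2) * (u - y) ^ 2)) := by
  rw [← exp_add, ← exp_add]
  congr 1
  field_simp
  ring

theorem exp_neg_mul_sq_le_of_abs_sub_le {b r s t : ℝ} (hb : 0 ≤ b) (h : |t - s| ≤ r) :
    exp (-b * t ^ 2) ≤ exp (b * r ^ 2) * exp (-(b / 2) * s ^ 2) := by
  have hts : (t - s) ^ 2 ≤ r ^ 2 := sq_le_sq' (abs_le.1 h).1 (abs_le.1 h).2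
  rw [← exp_add]
  refine exp_le_exp.2 ?_
  -- `s² ≤ 2t² + 2(t - s)²`, with defect `(2t - s)²`
  nlinarith [mul_nonneg hb (sq_nonneg (2 * t - s)), mul_le_mul_of_nonneg_left hts hb]

theorem lintegral_eq_ofReal_mul_lintegral_comp_mul_left {a : ℝ} (ha : 0 < a) (g : ℝ → ℝ≥0∞) :
    ∫⁻ x, g x = ENNReal.ofReal a * ∫⁻ u, g (a * u) := by
  have h : ∫⁻ x, g x ∂(Measure.map (a * ·) volume) = ∫⁻ u, g (a * u) :=
    (Homeomorph.mulLeft₀ a ha.ne').measurableEmbedding.lintegral_map g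
  rw [Real.map_volume_mul_left ha.ne', lintegral_smul_measure, abs_of_pos (inv_pos.2 ha)] at h
  rw [← h, smul_eq_mul, ← mul_assoc, ← ENNReal.ofReal_mul ha.le, mul_inv_cancel₀ ha.ne',
    ENNReal.ofReal_one, one_mul]

theorem lintegral_mul_le_of_setLIntegral_Icc_le {g w M : ℝ → ℝ≥0∞} {C : ℝ≥0∞} {r : ℝ}
    (hg : Measurable g) (hM : Measurable M)
    (hgC : ∀ z, ∫⁻ x in Icc (z - r) (z + r), g x ≤ C)
    (hwM : ∀ u z, |u - z| ≤ r → w u ≤ M z) :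
    ENNReal.ofReal (2 * r) * ∫⁻ u, g u * w u ≤ C * ∫⁻ z, M z := by
  have hmem : ∀ u z, z ∈ Icc (u - r) (u + r) ↔ u ∈ Icc (z - r) (z + r) := by
    intro u z
    simp only [mem_Icc]
    constructor <;> rintro ⟨h₁, h₂⟩ <;> constructor <;> linarith
  have hswap : ∀ u z, g u * (Icc (u - r) (u + r)).indicator M z
      = (Icc (z - r) (z + r)).indicator g u * M z := by
    intro u z
    simp only [indicator_apply, hmem]
    split_ifs <;> simp
  have hmeas :
      Measurable (Function.uncurry fun u z => (Icc (z - r) (z + r)).indicator g u * M z) := by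
    have hS : MeasurableSet {p : ℝ × ℝ | p.2 - r ≤ p.1 ∧ p.1 ≤ p.2 + r} :=
      (measurableSet_le (by fun_prop : Measurable fun p : ℝ × ℝ => p.2 - r) measurable_fst).inter
        (measurableSet_le measurable_fst (by fun_prop : Measurable fun p : ℝ × ℝ => p.2 + r))
    simp only [indicator_apply, mem_Icc]
    exact ((hg.comp measurable_fst).ite hS measurable_const).mul (hM.comp measurable_snd)
  calc ENNReal.ofReal (2 * r) * ∫⁻ u, g u * w u
      = ∫⁻ u, g u * ∫⁻ _ in Icc (u - r) (u + r), w u := by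
        rw [← lintegral_const_mul' _ _ ENNReal.ofReal_ne_top]
        congr 1 with u
        rw [setLIntegral_const, Real.volume_Icc]
        ring_nf
    _ ≤ ∫⁻ u, g u * ∫⁻ z in Icc (u - r) (u + r), M z := by
        refine lintegral_mono fun u =>
          mul_le_mul_right (setLIntegral_mono hM fun z hz => hwM u z ?_) _
        rw [mem_Icc] at hz
        exact abs_sub_le_iff.2 ⟨by linarith, by linarith⟩
    _ = ∫⁻ u, ∫⁻ z, (Icc (z - r) (z + r)).indicator g u * M z := by
        simp only [← hswap, ← lintegral_indicator measurableSet_Icc]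
        congr 1 with u
        rw [lintegral_const_mul _ (hM.indicator measurableSet_Icc)]
    _ = ∫⁻ z, ∫⁻ u, (Icc (z - r) (z + r)).indicator g u * M z :=
        lintegral_lintegral_swap hmeas.aemeasurable
    _ = ∫⁻ z, (∫⁻ u in Icc (z - r) (z + r), g u) * M z := by
        congr 1 with z
        rw [lintegral_mul_const _ (hg.indicator measurableSet_Icc),
          lintegral_indicator measurableSet_Icc]
    _ ≤ ∫⁻ z, C * M z := by
        gcongr with z
        exact hgC z
    _ = C * ∫⁻ z, M z := lintegral_const_mul _ hM

theorem lintegral_mul_exp_neg_mul_sq_le {g : ℝ → ℝ≥0∞} {C : ℝ≥0∞} {b r : ℝ} (hb : 0 ≤ b) (c : ℝ)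
    (hg : Measurable g) (hgC : ∀ z, ∫⁻ x in Icc (z - r) (z + r), g x ≤ C) :
    ENNReal.ofReal (2 * r) * ∫⁻ u, g u * ENNReal.ofReal (exp (-b * (u - c) ^ 2))
      ≤ C * (ENNReal.ofReal (exp (b * r ^ 2)) * ∫⁻ z, ENNReal.ofReal (exp (-(b / 2) * z ^ 2))) := by
  have h := lintegral_mul_le_of_setLIntegral_Icc_le hg
    (M := fun z => ENNReal.ofReal (exp (b * r ^ 2)) * ENNReal.ofReal (exp (-(b / 2) * (z - c) ^ 2)))
    (by fun_prop) hgC fun u z huz => by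
      rw [← ENNReal.ofReal_mul (exp_nonneg _)]
      exact ENNReal.ofReal_le_ofReal
        (exp_neg_mul_sq_le_of_abs_sub_le hb (by rwa [sub_sub_sub_cancel_right]))
  rwa [lintegral_const_mul _ (by fun_prop),
    lintegral_sub_right_eq_self (fun z => ENNReal.ofReal (exp (-(b / 2) * z ^ 2)))] at h

theorem exists_lintegral_mul_exp_neg_sq_sub_le {a C₀ : ℝ} (ha : 0 < a) {f : ℝ → ℝ}
    (hf : Measurable f)
    (hgrow : ∀ z : ℝ,
      ∫⁻ x in Icc (z - 1 / 2) (z + 1 / 2),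
          ENNReal.ofReal (exp ((1 - a) * (a * x) ^ 2 / (2 * a)) * f (a * x))
        ≤ ENNReal.ofReal C₀) :
    ∃ K : ℝ≥0∞, K ≠ ⊤ ∧ ∀ y, ∫⁻ x, ENNReal.ofReal (f x * exp (-(x - y) ^ 2 / 2))
      ≤ K * ENNReal.ofReal (exp (-(1 - a) * y ^ 2 / 2)) := by
  set G : ℝ≥0∞ := ∫⁻ z, ENNReal.ofReal (exp (-(a / 2 / 2) * z ^ 2))
  have hG : G ≠ ⊤ := (integrable_exp_neg_mul_sq (by positivity)).lintegral_lt_top.ne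
  refine ⟨ENNReal.ofReal a * (ENNReal.ofReal C₀ * (ENNReal.ofReal (exp (a / 2 * (1 / 4))) * G)),
    by finiteness, fun y => ?_⟩
  have hbound := lintegral_mul_exp_neg_mul_sq_le (half_pos ha).le y
    (g := fun x => ENNReal.ofReal (exp ((1 - a) * (a * x) ^ 2 / (2 * a)) * f (a * x)))
    (by fun_prop) hgrow
  norm_num only [ENNReal.ofReal_one, one_mul] at hbound
  calc ∫⁻ x, ENNReal.ofReal (f x * exp (-(x - y) ^ 2 / 2))
      = ENNReal.ofReal a * ∫⁻ u, ENNReal.ofReal (exp (-(1 - a) * y ^ 2 / 2)) *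
          (ENNReal.ofReal (exp ((1 - a) * (a * u) ^ 2 / (2 * a)) * f (a * u))
            * ENNReal.ofReal (exp (-(a / 2) * (u - y) ^ 2))) := by
        rw [lintegral_eq_ofReal_mul_lintegral_comp_mul_left ha]
        congr 2 with u
        rw [exp_neg_sq_sub_div_two_eq_mul, ← ENNReal.ofReal_mul' (exp_nonneg _),
          ← ENNReal.ofReal_mul (exp_nonneg _)]
        ring_nf
    _ ≤ _ := by
        rw [lintegral_const_mul' _ _ ENNReal.ofReal_ne_top,
          mul_comm _ (ENNReal.ofReal (exp (-(1 - a) * y ^ 2 / 2))),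
          mul_left_comm (ENNReal.ofReal a)]
        exact mul_le_mul_right (mul_le_mul_right hbound _) _

theorem integrable_ofReal_mul_of_lintegral_le {α β : Type*}
    [MeasurableSpace α] [MeasurableSpace β]
    {μ : Measure α} {ν : Measure β} [SFinite μ] [SFinite ν] {k : α × β → ℝ} {φ : β → ℂ}
    {w : β → ℝ} {K : ℝ≥0∞} (hk : Measurable k) (hφ : Measurable φ) (hK : K ≠ ⊤)
    (hkw : ∀ y, ∫⁻ x, ‖k (x, y)‖ₑ ∂μ ≤ K * ENNReal.ofReal (w y))
    (hφw : ∫⁻ y, ENNReal.ofReal (‖φ y‖ * w y) ∂ν < ⊤) :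
    Integrable (fun p => (k p : ℂ) * φ p.2) (μ.prod ν) := by
  refine ⟨by fun_prop, ?_⟩
  calc ∫⁻ p, ‖(k p : ℂ) * φ p.2‖ₑ ∂(μ.prod ν)
      = ∫⁻ y, (∫⁻ x, ‖k (x, y)‖ₑ ∂μ) * ‖φ y‖ₑ ∂ν := by
        have hnorm : ∀ p, ‖(k p : ℂ) * φ p.2‖ₑ = ‖k p‖ₑ * ‖φ p.2‖ₑ := fun p => by
          rw [enorm_mul, ← ofReal_norm, Complex.norm_real, ofReal_norm]
        simp only [hnorm]
        rw [lintegral_prod_symm (fun p => ‖k p‖ₑ * ‖φ p.2‖ₑ) (by fun_prop)]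
        congr 1 with y
        exact lintegral_mul_const' _ _ (enorm_ne_top (x := φ y))
    _ ≤ ∫⁻ y, K * ENNReal.ofReal (‖φ y‖ * w y) ∂ν := by
        refine lintegral_mono fun y => ?_
        rw [ENNReal.ofReal_mul (norm_nonneg _), ofReal_norm, mul_left_comm, mul_comm]
        exact mul_le_mul_right (hkw y) _
    _ < ⊤ := by
        rw [lintegral_const_mul' _ _ hK]
        exact ENNReal.mul_lt_top hK.lt_top hφw

theorem stmt_17_general (a : ℝ) (ha : 0 < a) (C₀ : ℝ)
    (f : ℝ → ℝ) (hf_nonneg : ∀ x, 0 ≤ f x) (hf_meas : Measurable f)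
    (hgrow : ∀ z : ℝ,
      ∫⁻ x in Set.Icc (z - 1 / 2) (z + 1 / 2),
          ENNReal.ofReal (Real.exp ((1 - a) * (a * x) ^ 2 / (2 * a)) * f (a * x))
        ≤ ENNReal.ofReal C₀)
    (φ : ℝ → ℂ) (hφ_meas : Measurable φ)
    (hφ_int : ∫⁻ y : ℝ, ENNReal.ofReal (‖φ y‖ * Real.exp (-(1 - a) * y ^ 2 / 2)) < ⊤) :
    Integrable (fun p : ℝ × ℝ =>
        ((f p.1 * Real.sign (p.1 - a * p.2) * Real.exp (-(p.1 - p.2) ^ 2 / 2) : ℝ) : ℂ) * φ p.2)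
      (volume.prod volume) ∧
    ∫ y : ℝ, ((∫ x, f x * Real.sign (x - a * y) * Real.exp (-(x - y) ^ 2 / 2) : ℝ) : ℂ) * φ y
      = ∫ x : ℝ, ((f x : ℝ) : ℂ) *
          ∫ y : ℝ, ((Real.sign (x - a * y) * Real.exp (-(x - y) ^ 2 / 2) : ℝ) : ℂ) * φ y := by
  obtain ⟨K, hK, hKf⟩ := exists_lintegral_mul_exp_neg_sq_sub_le ha hf_meas hgrow
  have hkernel : ∀ y, ∫⁻ x, ‖f x * Real.sign (x - a * y) * Real.exp (-(x - y) ^ 2 / 2)‖ₑ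
      ≤ K * ENNReal.ofReal (Real.exp (-(1 - a) * y ^ 2 / 2)) := fun y =>
    (lintegral_mono fun x => by
      rw [Real.enorm_eq_ofReal_abs, ← abs_of_nonneg (mul_nonneg (hf_nonneg x) (exp_nonneg _))]
      exact ENNReal.ofReal_le_ofReal (Real.abs_mul_sign_mul_le _ _ _)).trans (hKf y)
  have hintegrable := integrable_ofReal_mul_of_lintegral_le
    (k := fun p : ℝ × ℝ => f p.1 * Real.sign (p.1 - a * p.2) * Real.exp (-(p.1 - p.2) ^ 2 / 2))
    (by fun_prop) hφ_meas hK hkernel hφ_int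
  refine ⟨hintegrable, ?_⟩
  calc ∫ y : ℝ, ((∫ x, f x * Real.sign (x - a * y) * Real.exp (-(x - y) ^ 2 / 2) : ℝ) : ℂ) * φ y
      = ∫ y : ℝ, ∫ x : ℝ, ((f x * Real.sign (x - a * y) * Real.exp (-(x - y) ^ 2 / 2) : ℝ) : ℂ)
          * φ y := by
        congr 1 with y
        rw [← integral_complex_ofReal, integral_mul_const]
    _ = ∫ x : ℝ, ∫ y : ℝ, ((f x * Real.sign (x - a * y) * Real.exp (-(x - y) ^ 2 / 2) : ℝ) : ℂ)
          * φ y := (integral_integral_swap hintegrable).symm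
    _ = _ := by
        congr 1 with x
        rw [← integral_const_mul]
        congr 1 with y
        push_cast
        ring

theorem stmt_17 (a : ℝ) (ha : 0 < a) (ha1 : a < 1) (C₀ : ℝ)
    (f : ℝ → ℝ) (hf_nonneg : ∀ x, 0 ≤ f x) (hf_meas : Measurable f)
    (hgrow : ∀ z : ℝ,
      ∫⁻ x in Set.Icc (z - 1 / 2) (z + 1 / 2),
          ENNReal.ofReal (Real.exp ((1 - a) * (a * x) ^ 2 / (2 * a)) * f (a * x))
        ≤ ENNReal.ofReal C₀)
    (φ : ℝ → ℂ) (hφ_meas : Measurable φ)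
    (hφ_int : ∫⁻ y : ℝ, ENNReal.ofReal (‖φ y‖ * Real.exp (-(1 - a) * y ^ 2 / 2)) < ⊤) :
    Integrable (fun p : ℝ × ℝ =>
        ((f p.1 * Real.sign (p.1 - a * p.2) * Real.exp (-(p.1 - p.2) ^ 2 / 2) : ℝ) : ℂ) * φ p.2)
      (volume.prod volume) ∧
    ∫ y : ℝ, ((∫ x, f x * Real.sign (x - a * y) * Real.exp (-(x - y) ^ 2 / 2) : ℝ) : ℂ) * φ y
      = ∫ x : ℝ, ((f x : ℝ) : ℂ) *
          ∫ y : ℝ, ((Real.sign (x - a * y) * Real.exp (-(x - y) ^ 2 / 2) : ℝ) : ℂ) * φ y :=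
  stmt_17_general a ha C₀ f hf_nonneg hf_meas hgrow φ hφ_meas hφ_int
end
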